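/- arXiv:2301.01631 — 6 statements merged into one kernel-verified Lean document; each statement's English description precedes it below -/
import Mathlib

section
/- Let k, H be natural numbers with 2H ≤ k. There exists an adaptive comparison-query strategy with k queries over D = (0,1] ⊆ ℝ (each query asks 'is x ≤ t' for an adaptively chosen threshold t ∈ ℝ) with output maps lo, hi : (Fin k → Bool) → ℝ such that for every x ∈ (0,1] and every response vector r that is H-valid for x: lo r ≤ x ≤ hi r and hi r − lo r ≤ S(k−H,H)/2^{k−H}. -/
/-- Partial binomial sum `S(N,h) = Σ_{j=0}^{h} C(N,j)`. -/
def S (N h : ℕ) : ℕ := ∑ j ∈ Finset.range (h + 1), N.choose j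

/-- Number of erroneous responses of a response vector `r` for the hidden element `x`,
given adaptive queries `Q`. -/
def errCount {D : Type*} {k : ℕ} (Q : (i : Fin k) → (Fin i.1 → Bool) → D → Bool)
    (x : D) (r : Fin k → Bool) : ℕ :=
  (Finset.univ.filter fun i : Fin k =>
    r i ≠ Q i (fun j => r (Fin.castLE i.isLt.le j)) x).card

/-- A response vector is `H`-valid for `x` if it contains at most `H` erroneous responses. -/
def HValid {D : Type*} {k : ℕ} (H : ℕ) (Q : (i : Fin k) → (Fin i.1 → Bool) → D → Bool)
    (x : D) (r : Fin k → Bool) : Prop :=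
  errCount Q x r ≤ H

namespace UlamAux

lemma S_zero_left (h : ℕ) : S 0 h = 1 := by
  induction h with
  | zero => simp [S]
  | succ n ih =>
    unfold S at *
    rw [Finset.sum_range_succ, ih, Nat.choose_zero_succ]

lemma S_zero_right (N : ℕ) : S N 0 = 1 := by simp [S]

lemma S_mono (N : ℕ) {h h' : ℕ} (hh : h ≤ h') : S N h ≤ S N h' :=
  Finset.sum_le_sum_of_subset (Finset.range_subset_range.mpr (by omega))

lemma S_eq_pow {N h : ℕ} (hN : N ≤ h) : S N h = 2 ^ N := by
  rw [← Nat.sum_range_choose N]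
  unfold S
  symm
  apply Finset.sum_subset (Finset.range_subset_range.mpr (by omega))
  intro j _ hj
  exact Nat.choose_eq_zero_of_lt (by simp at hj ⊢; omega)

lemma S_le_pow (N h : ℕ) : S N h ≤ 2 ^ N := by
  rcases le_total N h with hc | hc
  · exact (S_eq_pow hc).le
  · calc S N h ≤ S N N := S_mono N hc
      _ = 2 ^ N := S_eq_pow le_rfl

lemma S_succ {h : ℕ} (hh : 1 ≤ h) (N : ℕ) : S (N + 1) h = S N h + S N (h - 1) := by
  obtain ⟨h', rfl⟩ : ∃ h', h = h' + 1 := ⟨h - 1, by omega⟩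
  unfold S
  rw [Finset.sum_range_succ' (fun j => (N+1).choose j),
    Finset.sum_range_succ' (fun j => N.choose j) (h' + 1)]
  simp only [Nat.choose_succ_succ, Nat.choose_zero_right, Nat.add_sub_cancel,
    Nat.succ_eq_add_one]
  rw [Finset.sum_add_distrib]
  omega

/-- `bet a b = S(a-b, b) / 2^(a-b)` -/
noncomputable def bet (a b : ℕ) : ℝ := (S (a - b) b : ℝ) / 2 ^ (a - b)

lemma bet_nonneg (a b : ℕ) : 0 ≤ bet a b :=
  div_nonneg (by positivity) (by positivity)

lemma bet_le_one (a b : ℕ) : bet a b ≤ 1 := by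
  rw [bet, div_le_one (by positivity)]
  exact_mod_cast S_le_pow _ _

lemma bet_eq_one {a b : ℕ} (h2 : a ≤ 2 * b) : bet a b = 1 := by
  rw [bet, S_eq_pow (by omega)]
  push_cast
  rw [div_self (by positivity)]

lemma bet_a0 (a : ℕ) : bet a 0 = 1 / 2 ^ a := by
  rw [bet, Nat.sub_zero, S_zero_right, Nat.cast_one]

lemma bet_pascal {b : ℕ} (hb : 1 ≤ b) (a : ℕ) :
    bet a b + bet (a - 1) (b - 1) ≤ 2 * bet (a + 1) b := by
  rcases lt_or_ge a b with hc | hc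
  · rw [bet_eq_one (show a ≤ 2*b by omega),
      bet_eq_one (show a - 1 ≤ 2*(b-1) by omega),
      bet_eq_one (show a + 1 ≤ 2*b by omega)]
    norm_num
  · obtain ⟨N, rfl⟩ : ∃ N, a = N + b := ⟨a - b, by omega⟩
    have e1 : N + b - b = N := by omega
    have e2 : N + b - 1 - (b - 1) = N := by omega
    have e3 : N + b + 1 - b = N + 1 := by omega
    rw [bet, bet, bet, e1, e2, e3, S_succ hb N]
    rw [pow_succ]
    push_cast
    have : (0:ℝ) < 2 ^ N := by positivity
    field_simp
    ring_nf
    nlinarith [this]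

lemma bet_anti (a b : ℕ) : bet (a + 1) b ≤ bet a b := by
  rcases lt_or_ge a b with hc | hc
  · rw [bet_eq_one (by omega), bet_eq_one (by omega)]
  · obtain ⟨N, rfl⟩ : ∃ N, a = N + b := ⟨a - b, by omega⟩
    have e1 : N + b - b = N := by omega
    have e3 : N + b + 1 - b = N + 1 := by omega
    rw [bet, bet, e1, e3]
    rw [div_le_div_iff₀ (by positivity) (by positivity)]
    have hS : S (N+1) b ≤ 2 * S N b := by
      rcases Nat.eq_zero_or_pos b with rfl | hb
      · rw [S_zero_right, S_zero_right]; omega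
      · rw [S_succ hb N]
        have := S_mono N (show b - 1 ≤ b by omega)
        omega
    calc (S (N+1) b : ℝ) * 2 ^ N ≤ (2 * S N b : ℕ) * 2 ^ N := by
          have : (S (N+1) b : ℝ) ≤ (2 * S N b : ℕ) := by exact_mod_cast hS
          nlinarith [pow_pos (show (0:ℝ) < 2 by norm_num) N]
      _ = (S N b : ℝ) * 2 ^ (N + 1) := by push_cast; ring

lemma bet_anti_of_le {a a' : ℕ} (h : a ≤ a') (b : ℕ) : bet a' b ≤ bet a b := by
  induction a', h using Nat.le_induction with
  | base => exact le_rfl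
  | succ n hn ih => exact le_trans (bet_anti n b) ih

lemma bet_drop {b : ℕ} (hb : 1 ≤ b) (a : ℕ) : bet a (b - 1) ≤ bet (a + 1) b := by
  have e : a - (b - 1) = a + 1 - b := by omega
  rw [bet, bet, e]
  have h1 : (S (a+1-b) (b-1) : ℝ) ≤ (S (a+1-b) b : ℝ) := by
    exact_mod_cast S_mono _ (by omega)
  have h2 : (0:ℝ) < 2 ^ (a+1-b) := by positivity
  exact div_le_div_of_nonneg_right h1 h2.le


open Finset

/-- Potential of a state: nested intervals `(A j, B j]`, `j = 0..h`. -/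
noncomputable def Phi (q h : ℕ) (A B : ℕ → ℝ) : ℝ :=
  bet q h * (B 0 - A 0) +
    ∑ j ∈ range h, bet (q - (j+1)) (h - (j+1)) * ((A j - A (j+1)) + (B (j+1) - B j))

/-- New upper bounds after a `yes` answer at threshold `t`. -/
noncomputable def By (B : ℕ → ℝ) (t : ℝ) : ℕ → ℝ := fun j => if j = 0 then t else B (j - 1)

/-- New lower bounds after a `no` answer at threshold `t`. -/
noncomputable def An (A : ℕ → ℝ) (t : ℝ) : ℕ → ℝ := fun j => if j = 0 then t else A (j - 1)

@[simp] lemma By_zero (B : ℕ → ℝ) (t : ℝ) : By B t 0 = t := rfl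
@[simp] lemma By_succ (B : ℕ → ℝ) (t : ℝ) (j : ℕ) : By B t (j+1) = B j := by
  simp [By]
@[simp] lemma An_zero (A : ℕ → ℝ) (t : ℝ) : An A t 0 = t := rfl
@[simp] lemma An_succ (A : ℕ → ℝ) (t : ℝ) (j : ℕ) : An A t (j+1) = A j := by
  simp [An]

lemma phi_base (h : ℕ) (A B : ℕ → ℝ) : Phi 0 h A B = B h - A h := by
  have hb : ∀ b : ℕ, bet 0 b = 1 := fun b => by
    rw [bet, Nat.zero_sub, S_zero_left]; norm_num
  unfold Phi
  simp only [Nat.zero_sub, hb, one_mul]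
  rw [Finset.sum_add_distrib, Finset.sum_range_sub' (fun j => A j), Finset.sum_range_sub (fun j => B j)]
  ring

lemma phi_top (k H : ℕ) : Phi k H (fun _ => 0) (fun _ => 1) = bet k H := by
  unfold Phi
  simp

/-- Coefficient-sum inequality used for the interior move. -/
lemma coefsum (q h' : ℕ) (T : ℕ → ℝ) (hT : ∀ j, j < h'+1 → 0 ≤ T j) :
    (∑ j ∈ range (h'+1), bet (q-(j+1)) (h'+1-(j+1)) * T j)
      + (∑ i ∈ range h', bet (q-(i+2)) (h'+1-(i+2)) * T i)
    ≤ 2 * ∑ j ∈ range (h'+1), bet (q+1-(j+1)) (h'+1-(j+1)) * T j := by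
  rw [Finset.sum_range_succ (fun j => bet (q-(j+1)) (h'+1-(j+1)) * T j),
    Finset.sum_range_succ (fun j => bet (q+1-(j+1)) (h'+1-(j+1)) * T j)]
  have hmain : (∑ i ∈ range h', bet (q-(i+1)) (h'+1-(i+1)) * T i)
      + (∑ i ∈ range h', bet (q-(i+2)) (h'+1-(i+2)) * T i)
      ≤ ∑ i ∈ range h', 2 * (bet (q+1-(i+1)) (h'+1-(i+1)) * T i) := by
    rw [← Finset.sum_add_distrib]
    apply Finset.sum_le_sum
    intro i hi
    rw [Finset.mem_range] at hi
    have hb : 1 ≤ h' + 1 - (i+1) := by omega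
    have e1 : q - (i+2) = (q - (i+1)) - 1 := by omega
    have e2 : h'+1-(i+2) = (h'+1-(i+1)) - 1 := by omega
    have hp := bet_pascal hb (q - (i+1))
    have ha : bet (q+1-(i+1)) (h'+1-(i+1)) ≥ bet ((q-(i+1)) + 1) (h'+1-(i+1)) :=
      bet_anti_of_le (by omega) _
    have hTi := hT i (by omega)
    calc bet (q-(i+1)) (h'+1-(i+1)) * T i + bet (q-(i+2)) (h'+1-(i+2)) * T i
        = (bet (q-(i+1)) (h'+1-(i+1)) + bet ((q-(i+1))-1) ((h'+1-(i+1))-1)) * T i := by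
          rw [e1, e2]; ring
      _ ≤ (2 * bet ((q-(i+1)) + 1) (h'+1-(i+1))) * T i := by
          apply mul_le_mul_of_nonneg_right hp hTi
      _ ≤ 2 * (bet (q+1-(i+1)) (h'+1-(i+1)) * T i) := by nlinarith [hTi, ha, bet_nonneg ((q-(i+1))+1) (h'+1-(i+1))]
  have hlast : bet (q-(h'+1)) (h'+1-(h'+1)) * T h' ≤ 2 * (bet (q+1-(h'+1)) (h'+1-(h'+1)) * T h') := by
    have e0 : h' + 1 - (h'+1) = 0 := by omega
    rw [e0]
    have hTl := hT h' (by omega)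
    have h1 : bet (q-(h'+1)) 0 ≤ 2 * bet (q+1-(h'+1)) 0 := by
      rw [bet_a0, bet_a0]
      have e : 2 * ((1:ℝ)/2^(q+1-(h'+1))) = 2 / 2^(q+1-(h'+1)) := by ring
      rw [e, div_le_div_iff₀ (by positivity) (by positivity), one_mul]
      calc (2:ℝ) ^ (q+1-(h'+1)) ≤ 2 ^ ((q-(h'+1))+1) :=
            pow_le_pow_right₀ (by norm_num) (by omega)
        _ = 2 ^ (q-(h'+1)) * 2 := by rw [pow_succ]
        _ = 2 * 2 ^ (q-(h'+1)) := by ring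
    nlinarith [hTl, h1, bet_nonneg (q+1-(h'+1)) 0]
  rw [mul_add]
  have hsum2 : 2 * ∑ i ∈ range h', bet (q+1-(i+1)) (h'+1-(i+1)) * T i
      = ∑ i ∈ range h', 2 * (bet (q+1-(i+1)) (h'+1-(i+1)) * T i) := by
    rw [Finset.mul_sum]
  linarith [hmain, hlast, hsum2.ge, hsum2.le]

lemma phiY_expand (q h' : ℕ) (A B : ℕ → ℝ) (t : ℝ) :
    Phi q (h'+1) A (By B t)
      = (∑ i ∈ Finset.range h', bet (q-(i+1+1)) (h'+1-(i+1+1)) *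
          ((A (i+1) - A (i+1+1)) + (B (i+1) - B i)))
        + bet (q-1) h' * ((A 0 - A 1) + (B 0 - t)) + bet q (h'+1) * (t - A 0) := by
  unfold Phi
  rw [Finset.sum_range_succ']
  simp only [By_zero, By_succ, zero_add, Nat.add_sub_cancel]
  ring

lemma phiN_expand (q h' : ℕ) (A B : ℕ → ℝ) (t : ℝ) :
    Phi q (h'+1) (An A t) B
      = (∑ i ∈ Finset.range h', bet (q-(i+1+1)) (h'+1-(i+1+1)) *
          ((A i - A (i+1)) + (B (i+1+1) - B (i+1))))
        + bet (q-1) h' * ((t - A 0) + (B 1 - B 0)) + bet q (h'+1) * (B 0 - t) := by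
  unfold Phi
  rw [Finset.sum_range_succ']
  simp only [An_zero, An_succ, zero_add, Nat.add_sub_cancel]
  ring

lemma sumYN (q h' : ℕ) (A B : ℕ → ℝ) (t : ℝ)
    (hA : ∀ j, j < h'+1 → A (j+1) ≤ A j) (hB : ∀ j, j < h'+1 → B j ≤ B (j+1))
    (hAB : A 0 ≤ B 0) :
    Phi q (h'+1) A (By B t) + Phi q (h'+1) (An A t) B ≤ 2 * Phi (q+1) (h'+1) A B := by
  have hT : ∀ j, j < h'+1 → 0 ≤ (A j - A (j+1)) + (B (j+1) - B j) := by
    intro j hj; have := hA j hj; have := hB j hj; linarith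
  have hcs := coefsum q h' (fun j => (A j - A (j+1)) + (B (j+1) - B j)) hT
  beta_reduce at hcs
  have hw : bet q (h'+1) + bet (q-1) h' ≤ 2 * bet (q+1) (h'+1) := by
    have := bet_pascal (show 1 ≤ h'+1 by omega) q
    simpa using this
  have hwn : (0:ℝ) ≤ B 0 - A 0 := by linarith
  have eY := phiY_expand q h' A B t
  have eN := phiN_expand q h' A B t
  have hU : (∑ j ∈ Finset.range (h'+1), bet (q-(j+1)) (h'+1-(j+1)) *
        ((A j - A (j+1)) + (B (j+1) - B j)))
      = (∑ i ∈ Finset.range h', bet (q-(i+1+1)) (h'+1-(i+1+1)) *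
          ((A (i+1) - A (i+1+1)) + (B (i+1+1) - B (i+1))))
        + bet (q-1) h' * ((A 0 - A 1) + (B 1 - B 0)) := by
    rw [Finset.sum_range_succ']
    simp only [zero_add, Nat.add_sub_cancel]
  have hswap : (∑ i ∈ Finset.range h', bet (q-(i+1+1)) (h'+1-(i+1+1)) *
          ((A (i+1) - A (i+1+1)) + (B (i+1) - B i)))
      + (∑ i ∈ Finset.range h', bet (q-(i+1+1)) (h'+1-(i+1+1)) *
          ((A i - A (i+1)) + (B (i+1+1) - B (i+1))))
      = (∑ i ∈ Finset.range h', bet (q-(i+1+1)) (h'+1-(i+1+1)) *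
          ((A (i+1) - A (i+1+1)) + (B (i+1+1) - B (i+1))))
        + (∑ i ∈ Finset.range h', bet (q-(i+1+1)) (h'+1-(i+1+1)) *
          ((A i - A (i+1)) + (B (i+1) - B i))) := by
    rw [← Finset.sum_add_distrib, ← Finset.sum_add_distrib]
    exact Finset.sum_congr rfl (fun i _ => by ring)
  have hV : (∑ i ∈ Finset.range h', bet (q-(i+2)) (h'+1-(i+2)) *
        ((A i - A (i+1)) + (B (i+1) - B i)))
      = (∑ i ∈ Finset.range h', bet (q-(i+1+1)) (h'+1-(i+1+1)) *
        ((A i - A (i+1)) + (B (i+1) - B i))) := by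
    apply Finset.sum_congr rfl
    intro i _
    norm_num
  rw [eY, eN]
  unfold Phi
  rw [hV] at hcs
  rw [hU] at hcs
  nlinarith [hcs, hw, hwn, mul_le_mul_of_nonneg_right hw hwn, hswap]

lemma phiY_affine (q h' : ℕ) (A B : ℕ → ℝ) (t : ℝ) :
    Phi q (h'+1) A (By B t)
      = Phi q (h'+1) A (By B 0) + (bet q (h'+1) - bet (q-1) h') * t := by
  rw [phiY_expand, phiY_expand]; ring

lemma phiN_affine (q h' : ℕ) (A B : ℕ → ℝ) (t : ℝ) :
    Phi q (h'+1) (An A t) B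
      = Phi q (h'+1) (An A 0) B - (bet q (h'+1) - bet (q-1) h') * t := by
  rw [phiN_expand, phiN_expand]; ring

lemma dropR (q h' : ℕ) (A B : ℕ → ℝ)
    (hA : ∀ j, j < h'+1 → A (j+1) ≤ A j) (hB : ∀ j, j < h'+1 → B j ≤ B (j+1))
    (hAB : A 0 ≤ B 0) :
    Phi q h' A (fun j => B (j+1)) ≤ Phi (q+1) (h'+1) A B := by
  have hcoef : ∀ j, j < h' → bet (q-(j+1)) (h'-(j+1)) ≤ bet (q+1-(j+1)) (h'+1-(j+1)) := by
    intro j hj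
    have e1 : h' - (j+1) = (h'+1-(j+1)) - 1 := by omega
    have h2 : 1 ≤ h'+1-(j+1) := by omega
    calc bet (q-(j+1)) (h'-(j+1)) = bet (q-(j+1)) ((h'+1-(j+1))-1) := by rw [e1]
      _ ≤ bet ((q-(j+1))+1) (h'+1-(j+1)) := bet_drop h2 _
      _ ≤ bet (q+1-(j+1)) (h'+1-(j+1)) := bet_anti_of_le (by omega) _
  have hw : bet q h' ≤ bet (q+1) (h'+1) := by
    have := bet_drop (show 1 ≤ h'+1 by omega) q
    simpa using this
  -- split RHS sum
  have hsplit : (∑ j ∈ Finset.range (h'+1), bet (q+1-(j+1)) (h'+1-(j+1)) *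
        ((A j - A (j+1)) + (B (j+1) - B j)))
      = (∑ j ∈ Finset.range (h'+1), bet (q+1-(j+1)) (h'+1-(j+1)) * (A j - A (j+1)))
        + (∑ j ∈ Finset.range (h'+1), bet (q+1-(j+1)) (h'+1-(j+1)) * (B (j+1) - B j)) := by
    rw [← Finset.sum_add_distrib]
    exact Finset.sum_congr rfl (fun j _ => by ring)
  have hP : (∑ j ∈ Finset.range (h'+1), bet (q+1-(j+1)) (h'+1-(j+1)) * (A j - A (j+1)))
      = (∑ j ∈ Finset.range h', bet (q+1-(j+1)) (h'+1-(j+1)) * (A j - A (j+1)))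
        + bet (q+1-(h'+1)) (h'+1-(h'+1)) * (A h' - A (h'+1)) := by
    rw [Finset.sum_range_succ]
  have hS : (∑ j ∈ Finset.range (h'+1), bet (q+1-(j+1)) (h'+1-(j+1)) * (B (j+1) - B j))
      = (∑ i ∈ Finset.range h', bet (q+1-(i+1+1)) (h'+1-(i+1+1)) * (B (i+1+1) - B (i+1)))
        + bet q h' * (B 1 - B 0) := by
    rw [Finset.sum_range_succ']
    simp only [zero_add, Nat.add_sub_cancel]
  -- split LHS sum
  have hLsplit : (∑ j ∈ Finset.range h', bet (q-(j+1)) (h'-(j+1)) *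
        ((A j - A (j+1)) + (B (j+1+1) - B (j+1))))
      = (∑ j ∈ Finset.range h', bet (q-(j+1)) (h'-(j+1)) * (A j - A (j+1)))
        + (∑ j ∈ Finset.range h', bet (q-(j+1)) (h'-(j+1)) * (B (j+1+1) - B (j+1))) := by
    rw [← Finset.sum_add_distrib]
    exact Finset.sum_congr rfl (fun j _ => by ring)
  have hPle : (∑ j ∈ Finset.range h', bet (q-(j+1)) (h'-(j+1)) * (A j - A (j+1)))
      ≤ (∑ j ∈ Finset.range h', bet (q+1-(j+1)) (h'+1-(j+1)) * (A j - A (j+1))) := by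
    apply Finset.sum_le_sum
    intro j hj
    rw [Finset.mem_range] at hj
    have hPj : 0 ≤ A j - A (j+1) := by have := hA j (by omega); linarith
    exact mul_le_mul_of_nonneg_right (hcoef j hj) hPj
  have hSeq : (∑ j ∈ Finset.range h', bet (q-(j+1)) (h'-(j+1)) * (B (j+1+1) - B (j+1)))
      = (∑ i ∈ Finset.range h', bet (q+1-(i+1+1)) (h'+1-(i+1+1)) * (B (i+1+1) - B (i+1))) := by
    apply Finset.sum_congr rfl
    intro i _
    have e1 : q+1-(i+1+1) = q-(i+1) := by omega
    have e2 : h'+1-(i+1+1) = h'-(i+1) := by omega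
    rw [e1, e2]
  have hlast : 0 ≤ bet (q+1-(h'+1)) (h'+1-(h'+1)) * (A h' - A (h'+1)) := by
    apply mul_nonneg (bet_nonneg _ _)
    have := hA h' (by omega); linarith
  have hwn : (0:ℝ) ≤ B 0 - A 0 := by linarith
  have hs0 : (0:ℝ) ≤ B 1 - B 0 := by have := hB 0 (by omega); simpa using this
  unfold Phi
  rw [hsplit, hP, hS, hLsplit, hSeq]
  have hprod := mul_le_mul_of_nonneg_right hw hwn
  nlinarith [hPle, hlast, hprod, mul_nonneg (bet_nonneg q h') hs0]

lemma dropL (q h' : ℕ) (A B : ℕ → ℝ)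
    (hA : ∀ j, j < h'+1 → A (j+1) ≤ A j) (hB : ∀ j, j < h'+1 → B j ≤ B (j+1))
    (hAB : A 0 ≤ B 0) :
    Phi q h' (fun j => A (j+1)) B ≤ Phi (q+1) (h'+1) A B := by
  have hcoef : ∀ j, j < h' → bet (q-(j+1)) (h'-(j+1)) ≤ bet (q+1-(j+1)) (h'+1-(j+1)) := by
    intro j hj
    have e1 : h' - (j+1) = (h'+1-(j+1)) - 1 := by omega
    have h2 : 1 ≤ h'+1-(j+1) := by omega
    calc bet (q-(j+1)) (h'-(j+1)) = bet (q-(j+1)) ((h'+1-(j+1))-1) := by rw [e1]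
      _ ≤ bet ((q-(j+1))+1) (h'+1-(j+1)) := bet_drop h2 _
      _ ≤ bet (q+1-(j+1)) (h'+1-(j+1)) := bet_anti_of_le (by omega) _
  have hw : bet q h' ≤ bet (q+1) (h'+1) := by
    have := bet_drop (show 1 ≤ h'+1 by omega) q
    simpa using this
  have hsplit : (∑ j ∈ Finset.range (h'+1), bet (q+1-(j+1)) (h'+1-(j+1)) *
        ((A j - A (j+1)) + (B (j+1) - B j)))
      = (∑ j ∈ Finset.range (h'+1), bet (q+1-(j+1)) (h'+1-(j+1)) * (A j - A (j+1)))
        + (∑ j ∈ Finset.range (h'+1), bet (q+1-(j+1)) (h'+1-(j+1)) * (B (j+1) - B j)) := by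
    rw [← Finset.sum_add_distrib]
    exact Finset.sum_congr rfl (fun j _ => by ring)
  have hP : (∑ j ∈ Finset.range (h'+1), bet (q+1-(j+1)) (h'+1-(j+1)) * (A j - A (j+1)))
      = (∑ i ∈ Finset.range h', bet (q+1-(i+1+1)) (h'+1-(i+1+1)) * (A (i+1) - A (i+1+1)))
        + bet q h' * (A 0 - A 1) := by
    rw [Finset.sum_range_succ']
    simp only [zero_add, Nat.add_sub_cancel]
  have hS : (∑ j ∈ Finset.range (h'+1), bet (q+1-(j+1)) (h'+1-(j+1)) * (B (j+1) - B j))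
      = (∑ j ∈ Finset.range h', bet (q+1-(j+1)) (h'+1-(j+1)) * (B (j+1) - B j))
        + bet (q+1-(h'+1)) (h'+1-(h'+1)) * (B (h'+1) - B h') := by
    rw [Finset.sum_range_succ]
  have hLsplit : (∑ j ∈ Finset.range h', bet (q-(j+1)) (h'-(j+1)) *
        ((A (j+1) - A (j+1+1)) + (B (j+1) - B j)))
      = (∑ j ∈ Finset.range h', bet (q-(j+1)) (h'-(j+1)) * (A (j+1) - A (j+1+1)))
        + (∑ j ∈ Finset.range h', bet (q-(j+1)) (h'-(j+1)) * (B (j+1) - B j)) := by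
    rw [← Finset.sum_add_distrib]
    exact Finset.sum_congr rfl (fun j _ => by ring)
  have hSle : (∑ j ∈ Finset.range h', bet (q-(j+1)) (h'-(j+1)) * (B (j+1) - B j))
      ≤ (∑ j ∈ Finset.range h', bet (q+1-(j+1)) (h'+1-(j+1)) * (B (j+1) - B j)) := by
    apply Finset.sum_le_sum
    intro j hj
    rw [Finset.mem_range] at hj
    have hSj : 0 ≤ B (j+1) - B j := by have := hB j (by omega); linarith
    exact mul_le_mul_of_nonneg_right (hcoef j hj) hSj
  have hPeq : (∑ j ∈ Finset.range h', bet (q-(j+1)) (h'-(j+1)) * (A (j+1) - A (j+1+1)))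
      = (∑ i ∈ Finset.range h', bet (q+1-(i+1+1)) (h'+1-(i+1+1)) * (A (i+1) - A (i+1+1))) := by
    apply Finset.sum_congr rfl
    intro i _
    have e1 : q+1-(i+1+1) = q-(i+1) := by omega
    have e2 : h'+1-(i+1+1) = h'-(i+1) := by omega
    rw [e1, e2]
  have hlast : 0 ≤ bet (q+1-(h'+1)) (h'+1-(h'+1)) * (B (h'+1) - B h') := by
    apply mul_nonneg (bet_nonneg _ _)
    have := hB h' (by omega); linarith
  have hwn : (0:ℝ) ≤ B 0 - A 0 := by linarith
  have hp0 : (0:ℝ) ≤ A 0 - A 1 := by have := hA 0 (by omega); simpa using this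
  unfold Phi
  rw [hsplit, hP, hS, hLsplit, hPeq]
  have hprod := mul_le_mul_of_nonneg_right hw hwn
  nlinarith [hSle, hlast, hprod, mul_nonneg (bet_nonneg q h') hp0]

/-- Prepend a first threshold `t` to a pair of response-dependent strategies. -/
noncomputable def Tcons (q : ℕ) (t : ℝ) (Tb : Bool → (i : Fin q) → (Fin i.1 → Bool) → ℝ) :
    (i : Fin (q+1)) → (Fin i.1 → Bool) → ℝ :=
  Fin.cases (fun _ => t)
    (fun i' hist => Tb (hist ⟨0, by simp⟩) i' (fun j => hist ⟨j.1 + 1, by have := j.isLt; simp only [Fin.val_succ]; omega⟩))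

lemma errCount_cons (q : ℕ) (t : ℝ) (Tb : Bool → (i : Fin q) → (Fin i.1 → Bool) → ℝ)
    (x : ℝ) (r : Fin (q+1) → Bool) :
    errCount (fun i h (y : ℝ) => decide (y ≤ Tcons q t Tb i h)) x r
      = (if r 0 ≠ decide (x ≤ t) then 1 else 0)
        + errCount (fun i h (y : ℝ) => decide (y ≤ Tb (r 0) i h)) x (fun i => r i.succ) := by
  unfold errCount
  rw [Finset.card_filter, Finset.card_filter, Fin.sum_univ_succ]
  congr 1

lemma errCount_zero (T : (i : Fin 0) → (Fin i.1 → Bool) → ℝ) (x : ℝ) (r : Fin 0 → Bool) :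
    errCount (fun i h (y : ℝ) => decide (y ≤ T i h)) x r = 0 := by
  simp [errCount]

lemma chainB {B : ℕ → ℝ} {h : ℕ} (hB : ∀ j, j < h → B j ≤ B (j+1)) :
    ∀ {i j}, i ≤ j → j ≤ h → B i ≤ B j := by
  intro i j hij hjh
  induction j, hij using Nat.le_induction with
  | base => exact le_rfl
  | succ n hn ih => exact le_trans (ih (by omega)) (hB n (by omega))

lemma chainA {A : ℕ → ℝ} {h : ℕ} (hA : ∀ j, j < h → A (j+1) ≤ A j) :
    ∀ {i j}, i ≤ j → j ≤ h → A j ≤ A i := by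
  intro i j hij hjh
  induction j, hij using Nat.le_induction with
  | base => exact le_rfl
  | succ n hn ih => exact le_trans (hA n (by omega)) (ih (by omega))

/-- Assembly of one query step from two branch strategies. -/
lemma assemble (q h : ℕ) (A B : ℕ → ℝ) (t : ℝ)
    (hb : Bool → ℕ) (Ab Bb : Bool → ℕ → ℝ)
    (hIH : ∀ b : Bool, ∃ (T : (i : Fin q) → (Fin i.1 → Bool) → ℝ)
        (lo hi : (Fin q → Bool) → ℝ),
      (∀ r, lo r ≤ hi r ∧ hi r - lo r ≤ Phi q (hb b) (Ab b) (Bb b)) ∧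
      (∀ (x : ℝ) (r : Fin q → Bool),
        errCount (fun i hh (y:ℝ) => decide (y ≤ T i hh)) x r ≤ hb b →
        Ab b (hb b - errCount (fun i hh (y:ℝ) => decide (y ≤ T i hh)) x r) < x →
        x ≤ Bb b (hb b - errCount (fun i hh (y:ℝ) => decide (y ≤ T i hh)) x r) →
        lo r ≤ x ∧ x ≤ hi r))
    (hpot : ∀ b, Phi q (hb b) (Ab b) (Bb b) ≤ Phi (q+1) h A B)
    (htr : ∀ (b : Bool) (x : ℝ) (e' : ℕ),
      (if b ≠ decide (x ≤ t) then 1 else 0) + e' ≤ h →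
      A (h - ((if b ≠ decide (x ≤ t) then 1 else 0) + e')) < x →
      x ≤ B (h - ((if b ≠ decide (x ≤ t) then 1 else 0) + e')) →
      e' ≤ hb b ∧ Ab b (hb b - e') < x ∧ x ≤ Bb b (hb b - e')) :
    ∃ (T : (i : Fin (q+1)) → (Fin i.1 → Bool) → ℝ)
        (lo hi : (Fin (q+1) → Bool) → ℝ),
      (∀ r, lo r ≤ hi r ∧ hi r - lo r ≤ Phi (q+1) h A B) ∧
      (∀ (x : ℝ) (r : Fin (q+1) → Bool),
        errCount (fun i hh (y:ℝ) => decide (y ≤ T i hh)) x r ≤ h →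
        A (h - errCount (fun i hh (y:ℝ) => decide (y ≤ T i hh)) x r) < x →
        x ≤ B (h - errCount (fun i hh (y:ℝ) => decide (y ≤ T i hh)) x r) →
        lo r ≤ x ∧ x ≤ hi r) := by
  choose T lo hi hw hs using hIH
  refine ⟨Tcons q t T, fun r => lo (r 0) (fun i => r i.succ),
    fun r => hi (r 0) (fun i => r i.succ), ?_, ?_⟩
  · intro r
    exact ⟨(hw (r 0) _).1, le_trans (hw (r 0) _).2 (hpot (r 0))⟩
  · intro x r hcount hax hxb
    rw [errCount_cons] at hcount hax hxb
    obtain ⟨h1, h2, h3⟩ := htr (r 0) x _ hcount hax hxb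
    exact hs (r 0) x _ h1 h2 h3

lemma htr_mid (h : ℕ) (A B : ℕ → ℝ) (t : ℝ)
    (hA : ∀ j, j < h → A (j+1) ≤ A j) (hB : ∀ j, j < h → B j ≤ B (j+1))
    (hta : A 0 ≤ t) (htb : t ≤ B 0) :
    ∀ (b : Bool) (x : ℝ) (e' : ℕ),
      (if b ≠ decide (x ≤ t) then 1 else 0) + e' ≤ h →
      A (h - ((if b ≠ decide (x ≤ t) then 1 else 0) + e')) < x →
      x ≤ B (h - ((if b ≠ decide (x ≤ t) then 1 else 0) + e')) →
      e' ≤ h ∧ (cond b A (An A t)) (h - e') < x ∧ x ≤ (cond b (By B t) B) (h - e') := by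
  intro b x e' h1 h2 h3
  by_cases hxt : x ≤ t
  · cases b with
    | true =>
      simp only [Bool.cond_true]
      have he : (if (true : Bool) ≠ decide (x ≤ t) then 1 else 0) = 0 := by simp [hxt]
      rw [he, zero_add] at h1 h2 h3
      refine ⟨h1, h2, ?_⟩
      rcases Nat.eq_zero_or_pos (h - e') with hz | hpos
      · rw [hz]; exact hxt
      · obtain ⟨m, hm⟩ : ∃ m, h - e' = m + 1 := ⟨h - e' - 1, by omega⟩
        rw [hm, By_succ]
        calc x ≤ t := hxt
          _ ≤ B 0 := htb
          _ ≤ B m := chainB hB (Nat.zero_le m) (by omega)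
    | false =>
      simp only [Bool.cond_false]
      have he : (if (false : Bool) ≠ decide (x ≤ t) then 1 else 0) = 1 := by simp [hxt]
      rw [he] at h1 h2 h3
      have e2 : h - e' = (h - (1 + e')) + 1 := by omega
      refine ⟨by omega, ?_, ?_⟩
      · rw [e2, An_succ]; exact h2
      · rw [e2]
        calc x ≤ B (h - (1 + e')) := h3
          _ ≤ B (h - (1 + e') + 1) := hB _ (by omega)
  · cases b with
    | true =>
      simp only [Bool.cond_true]
      have he : (if (true : Bool) ≠ decide (x ≤ t) then 1 else 0) = 1 := by simp [hxt]
      rw [he] at h1 h2 h3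
      have e2 : h - e' = (h - (1 + e')) + 1 := by omega
      refine ⟨by omega, ?_, ?_⟩
      · rw [e2]
        calc A (h - (1 + e') + 1) ≤ A (h - (1 + e')) := hA _ (by omega)
          _ < x := h2
      · rw [e2, By_succ]; exact h3
    | false =>
      simp only [Bool.cond_false]
      have he : (if (false : Bool) ≠ decide (x ≤ t) then 1 else 0) = 0 := by simp [hxt]
      rw [he, zero_add] at h1 h2 h3
      refine ⟨h1, ?_, h3⟩
      rcases Nat.eq_zero_or_pos (h - e') with hz | hpos
      · rw [hz]; exact lt_of_not_ge hxt
      · obtain ⟨m, hm⟩ : ∃ m, h - e' = m + 1 := ⟨h - e' - 1, by omega⟩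
        rw [hm, An_succ]
        calc A m ≤ A 0 := chainA hA (Nat.zero_le m) (by omega)
          _ ≤ t := hta
          _ < x := lt_of_not_ge hxt

lemma htr_c1 (h' : ℕ) (A B : ℕ → ℝ)
    (hA : ∀ j, j < h'+1 → A (j+1) ≤ A j) (hB : ∀ j, j < h'+1 → B j ≤ B (j+1))
    (hAB : A 0 ≤ B 0) :
    ∀ (b : Bool) (x : ℝ) (e' : ℕ),
      (if b ≠ decide (x ≤ B 0) then 1 else 0) + e' ≤ h'+1 →
      A (h'+1 - ((if b ≠ decide (x ≤ B 0) then 1 else 0) + e')) < x →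
      x ≤ B (h'+1 - ((if b ≠ decide (x ≤ B 0) then 1 else 0) + e')) →
      e' ≤ (cond b (h'+1) h') ∧ A ((cond b (h'+1) h') - e') < x ∧
        x ≤ (cond b (By B (B 0)) (fun j => B (j+1))) ((cond b (h'+1) h') - e') := by
  intro b x e' h1 h2 h3
  by_cases hxt : x ≤ B 0
  · cases b with
    | true =>
      have hmid := htr_mid (h'+1) A B (B 0) hA hB hAB le_rfl true x e' h1 h2 h3
      exact hmid
    | false =>
      simp only [Bool.cond_false]
      have he : (if (false : Bool) ≠ decide (x ≤ B 0) then 1 else 0) = 1 := by simp [hxt]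
      rw [he] at h1 h2 h3
      have e2 : h'+1 - (1 + e') = h' - e' := by omega
      rw [e2] at h2 h3
      refine ⟨by omega, h2, ?_⟩
      calc x ≤ B (h' - e') := h3
        _ ≤ B ((h' - e') + 1) := hB _ (by omega)
  · cases b with
    | true =>
      have hmid := htr_mid (h'+1) A B (B 0) hA hB hAB le_rfl true x e' h1 h2 h3
      exact hmid
    | false =>
      simp only [Bool.cond_false]
      have he : (if (false : Bool) ≠ decide (x ≤ B 0) then 1 else 0) = 0 := by simp [hxt]
      rw [he, zero_add] at h1 h2 h3
      have he' : e' ≤ h' := by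
        by_contra hcon
        have : e' = h' + 1 := by omega
        rw [this, Nat.sub_self] at h3
        exact hxt h3
      have e2 : h'+1 - e' = (h' - e') + 1 := by omega
      refine ⟨he', ?_, ?_⟩
      · calc A (h' - e') ≤ A 0 := chainA hA (Nat.zero_le _) (by omega)
          _ ≤ B 0 := hAB
          _ < x := lt_of_not_ge hxt
      · rw [e2] at h3; exact h3

lemma htr_c2 (h' : ℕ) (A B : ℕ → ℝ)
    (hA : ∀ j, j < h'+1 → A (j+1) ≤ A j) (hB : ∀ j, j < h'+1 → B j ≤ B (j+1))
    (hAB : A 0 ≤ B 0) :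
    ∀ (b : Bool) (x : ℝ) (e' : ℕ),
      (if b ≠ decide (x ≤ A 0) then 1 else 0) + e' ≤ h'+1 →
      A (h'+1 - ((if b ≠ decide (x ≤ A 0) then 1 else 0) + e')) < x →
      x ≤ B (h'+1 - ((if b ≠ decide (x ≤ A 0) then 1 else 0) + e')) →
      e' ≤ (cond b h' (h'+1)) ∧
        (cond b (fun j => A (j+1)) (An A (A 0))) ((cond b h' (h'+1)) - e') < x ∧
        x ≤ B ((cond b h' (h'+1)) - e') := by
  intro b x e' h1 h2 h3
  by_cases hxt : x ≤ A 0
  · cases b with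
    | false =>
      have hmid := htr_mid (h'+1) A B (A 0) hA hB le_rfl hAB false x e' h1 h2 h3
      exact hmid
    | true =>
      simp only [Bool.cond_true]
      have he : (if (true : Bool) ≠ decide (x ≤ A 0) then 1 else 0) = 0 := by simp [hxt]
      rw [he, zero_add] at h1 h2 h3
      have he' : e' ≤ h' := by
        by_contra hcon
        have : e' = h' + 1 := by omega
        rw [this, Nat.sub_self] at h2
        exact absurd (lt_of_lt_of_le h2 hxt) (lt_irrefl _)
      have e2 : h'+1 - e' = (h' - e') + 1 := by omega
      refine ⟨he', ?_, ?_⟩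
      · rw [e2] at h2; exact h2
      · calc x ≤ A 0 := hxt
          _ ≤ B 0 := hAB
          _ ≤ B (h' - e') := chainB hB (Nat.zero_le _) (by omega)
  · cases b with
    | false =>
      have hmid := htr_mid (h'+1) A B (A 0) hA hB le_rfl hAB false x e' h1 h2 h3
      exact hmid
    | true =>
      simp only [Bool.cond_true]
      have he : (if (true : Bool) ≠ decide (x ≤ A 0) then 1 else 0) = 1 := by simp [hxt]
      rw [he] at h1 h2 h3
      have e2 : h'+1 - (1 + e') = h' - e' := by omega
      rw [e2] at h2 h3
      refine ⟨by omega, ?_, h3⟩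
      calc A ((h' - e') + 1) ≤ A (h' - e') := hA _ (by omega)
        _ < x := h2

lemma key : ∀ (q h : ℕ) (A B : ℕ → ℝ),
    (∀ j, j < h → A (j+1) ≤ A j) → (∀ j, j < h → B j ≤ B (j+1)) → A 0 ≤ B 0 →
    ∃ (T : (i : Fin q) → (Fin i.1 → Bool) → ℝ)
        (lo hi : (Fin q → Bool) → ℝ),
      (∀ r, lo r ≤ hi r ∧ hi r - lo r ≤ Phi q h A B) ∧
      (∀ (x : ℝ) (r : Fin q → Bool),
        errCount (fun i hh (y:ℝ) => decide (y ≤ T i hh)) x r ≤ h →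
        A (h - errCount (fun i hh (y:ℝ) => decide (y ≤ T i hh)) x r) < x →
        x ≤ B (h - errCount (fun i hh (y:ℝ) => decide (y ≤ T i hh)) x r) →
        lo r ≤ x ∧ x ≤ hi r) := by
  intro q
  induction q with
  | zero =>
    intro h A B hA hB hAB
    refine ⟨fun _ _ => 0, fun _ => A h, fun _ => B h, ?_, ?_⟩
    · intro r
      constructor
      · calc A h ≤ A 0 := chainA hA (Nat.zero_le h) le_rfl
          _ ≤ B 0 := hAB
          _ ≤ B h := chainB hB (Nat.zero_le h) le_rfl
      · rw [phi_base]
    · intro x r _ h2 h3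
      rw [errCount_zero] at h2 h3
      rw [Nat.sub_zero] at h2 h3
      exact ⟨le_of_lt h2, h3⟩
  | succ q IH =>
    intro h A B hA hB hAB
    match h with
    | 0 =>
      have hta : A 0 ≤ (A 0 + B 0)/2 := by linarith
      have htb : (A 0 + B 0)/2 ≤ B 0 := by linarith
      apply assemble q 0 A B ((A 0 + B 0)/2) (fun _ => 0)
        (fun b => cond b A (An A ((A 0 + B 0)/2)))
        (fun b => cond b (By B ((A 0 + B 0)/2)) B)
      · intro b
        cases b with
        | true =>
          exact IH 0 A (By B ((A 0 + B 0)/2)) (by omega) (by omega) hta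
        | false =>
          exact IH 0 (An A ((A 0 + B 0)/2)) B (by omega) (by omega) htb
      · have hpq : bet q 0 = 2 * bet (q+1) 0 := by
          rw [bet_a0, bet_a0, pow_succ]
          have : (0:ℝ) < 2 ^ q := by positivity
          field_simp
        intro b
        cases b with
        | true =>
          simp only [Bool.cond_true, Phi, Finset.range_zero, Finset.sum_empty, add_zero,
            By_zero]
          rw [hpq]
          have hbn := bet_nonneg (q+1) 0
          nlinarith [hbn]
        | false =>
          simp only [Bool.cond_false, Phi, Finset.range_zero, Finset.sum_empty, add_zero,
            An_zero]
          rw [hpq]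
          have hbn := bet_nonneg (q+1) 0
          nlinarith [hbn]
      · exact htr_mid 0 A B ((A 0 + B 0)/2) hA hB hta htb
    | (h'+1) =>
      have hinvBy : ∀ t : ℝ, A 0 ≤ t → t ≤ B 0 →
          (∀ j, j < h'+1 → By B t j ≤ By B t (j+1)) := by
        intro t h1 h2 j hj
        match j with
        | 0 => rw [By_zero, By_succ]; exact h2
        | (m+1) => rw [By_succ, By_succ]; exact hB m (by omega)
      have hinvAn : ∀ t : ℝ, A 0 ≤ t →
          (∀ j, j < h'+1 → An A t (j+1) ≤ An A t j) := by
        intro t h1 j hj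
        match j with
        | 0 => rw [An_zero, An_succ]; exact h1
        | (m+1) => rw [An_succ, An_succ]; exact hA m (by omega)
      by_cases hc1 : Phi q (h'+1) A (By B (B 0)) ≤ Phi q (h'+1) (An A (B 0)) B
      · -- case 1 : ask at t = B 0
        apply assemble q (h'+1) A B (B 0) (fun b => cond b (h'+1) h')
          (fun _ => A) (fun b => cond b (By B (B 0)) (fun j => B (j+1)))
        · intro b
          cases b with
          | true =>
            exact IH (h'+1) A (By B (B 0)) hA (hinvBy (B 0) hAB le_rfl) hAB
          | false =>
            exact IH h' A (fun j => B (j+1)) (fun j hj => hA j (by omega))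
              (fun j hj => hB (j+1) (by omega)) (le_trans hAB (hB 0 (by omega)))
        · intro b
          cases b with
          | true =>
            simp only [Bool.cond_true]
            have hs := sumYN q h' A B (B 0) hA hB hAB
            linarith
          | false =>
            simp only [Bool.cond_false]
            exact dropR q h' A B hA hB hAB
        · exact htr_c1 h' A B hA hB hAB
      · by_cases hc2 : Phi q (h'+1) (An A (A 0)) B ≤ Phi q (h'+1) A (By B (A 0))
        · -- case 2 : ask at t = A 0
          apply assemble q (h'+1) A B (A 0) (fun b => cond b h' (h'+1))
            (fun b => cond b (fun j => A (j+1)) (An A (A 0))) (fun _ => B)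
          · intro b
            cases b with
            | true =>
              exact IH h' (fun j => A (j+1)) B (fun j hj => hA (j+1) (by omega))
                (fun j hj => hB j (by omega)) (le_trans (hA 0 (by omega)) hAB)
            | false =>
              exact IH (h'+1) (An A (A 0)) B (hinvAn (A 0) le_rfl) hB hAB
          · intro b
            cases b with
            | true =>
              simp only [Bool.cond_true]
              exact dropL q h' A B hA hB hAB
            | false =>
              simp only [Bool.cond_false]
              have hs := sumYN q h' A B (A 0) hA hB hAB
              linarith
          · exact htr_c2 h' A B hA hB hAB
        · -- case 3 : interior equalizing threshold
          push_neg at hc1 hc2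
          rw [phiY_affine, phiN_affine] at hc1 hc2
          set Y0 := Phi q (h'+1) A (By B 0) with hY0
          set N0 := Phi q (h'+1) (An A 0) B with hN0
          set c := bet q (h'+1) - bet (q-1) h' with hcdef
          have hcpos : 0 < c := by
            by_contra hle
            push_neg at hle
            nlinarith [hc1, hc2, hAB, mul_nonpos_of_nonpos_of_nonneg hle (sub_nonneg.mpr hAB)]
          set t := (N0 - Y0) / (2*c) with htdef
          have hta : A 0 < t := by
            rw [htdef, lt_div_iff₀ (by positivity)]
            nlinarith [hc2]
          have htb : t < B 0 := by
            rw [htdef, div_lt_iff₀ (by positivity)]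
            nlinarith [hc1]
          have hYt : Phi q (h'+1) A (By B t) = (Y0 + N0) / 2 := by
            rw [phiY_affine, ← hY0, ← hcdef, htdef]
            field_simp
            ring
          have hNt : Phi q (h'+1) (An A t) B = (Y0 + N0) / 2 := by
            rw [phiN_affine, ← hN0, ← hcdef, htdef]
            field_simp
            ring
          have hs := sumYN q h' A B t hA hB hAB
          rw [hYt, hNt] at hs
          apply assemble q (h'+1) A B t (fun _ => h'+1)
            (fun b => cond b A (An A t)) (fun b => cond b (By B t) B)
          · intro b
            cases b with
            | true =>
              exact IH (h'+1) A (By B t) hA (hinvBy t hta.le htb.le) hta.le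
            | false =>
              exact IH (h'+1) (An A t) B (hinvAn t hta.le) hB htb.le
          · intro b
            cases b with
            | true =>
              simp only [Bool.cond_true]
              rw [hYt]; linarith
            | false =>
              simp only [Bool.cond_false]
              rw [hNt]; linarith
          · exact htr_mid (h'+1) A B t hA hB hta.le htb.le

end UlamAux

theorem stmt1 (k H : ℕ) (hH : 2 * H ≤ k) :
    ∃ (T : (i : Fin k) → (Fin i.1 → Bool) → ℝ)
      (lo hi : (Fin k → Bool) → ℝ),
      ∀ x ∈ Set.Ioc (0 : ℝ) 1, ∀ r : Fin k → Bool,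
        HValid H (fun i h (y : ℝ) => decide (y ≤ T i h)) x r →
        lo r ≤ x ∧ x ≤ hi r ∧ hi r - lo r ≤ (S (k - H) H : ℝ) / 2 ^ (k - H) := by
  obtain ⟨T, lo, hi, hwidth, hsound⟩ := UlamAux.key k H (fun _ => (0:ℝ)) (fun _ => (1:ℝ))
    (fun j _ => le_rfl) (fun j _ => le_rfl) zero_le_one
  refine ⟨T, lo, hi, ?_⟩
  intro x hx r hvalid
  have hc : errCount (fun i h (y : ℝ) => decide (y ≤ T i h)) x r ≤ H := hvalid
  obtain ⟨h1, h2⟩ := hsound x r hc hx.1 hx.2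
  refine ⟨h1, h2, ?_⟩
  calc hi r - lo r ≤ UlamAux.Phi k H (fun _ => 0) (fun _ => 1) := (hwidth r).2
    _ = UlamAux.bet k H := UlamAux.phi_top k H
    _ = (S (k - H) H : ℝ) / 2 ^ (k - H) := rfl
end

section
/- Let k, H, μ be natural numbers with 2H ≤ k and μ · S(k,H) > 2^k. Then for every adaptive k-query strategy over D = Fin μ (arbitrary binary queries) with output map out : (Fin k → Bool) → Fin μ, there exist x ∈ Fin μ and a response vector r that is H-valid for x such that out r ≠ x. -/
/-- Build the response vector for hidden `x` with error set `E`. -/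
def build {D : Type*} {k : ℕ} (Q : (i : Fin k) → (Fin i.1 → Bool) → D → Bool)
    (x : D) (E : Finset (Fin k)) : Fin k → Bool
  | i => xor (Q i (fun j => build Q x E (Fin.castLE i.isLt.le j)) x) (decide (i ∈ E))
  termination_by i => i.1
  decreasing_by exact j.isLt

lemma build_eq {D : Type*} {k : ℕ} (Q : (i : Fin k) → (Fin i.1 → Bool) → D → Bool)
    (x : D) (E : Finset (Fin k)) (i : Fin k) :
    build Q x E i =
      xor (Q i (fun j => build Q x E (Fin.castLE i.isLt.le j)) x) (decide (i ∈ E)) := by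
  rw [build]

lemma errCount_build {D : Type*} {k : ℕ} (Q : (i : Fin k) → (Fin i.1 → Bool) → D → Bool)
    (x : D) (E : Finset (Fin k)) : errCount Q x (build Q x E) = E.card := by
  unfold errCount
  congr 1
  ext i
  simp only [Finset.mem_filter, Finset.mem_univ, true_and]
  rw [build_eq]
  cases h : decide (i ∈ E) <;> simp_all [Bool.xor_comm]

lemma build_inj {D : Type*} {k : ℕ} (Q : (i : Fin k) → (Fin i.1 → Bool) → D → Bool)
    (x : D) (E E' : Finset (Fin k)) (h : build Q x E = build Q x E') : E = E' := by
  ext i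
  have h1 := build_eq Q x E i
  have h2 := build_eq Q x E' i
  rw [h] at h1
  rw [h2] at h1
  have : decide (i ∈ E) = decide (i ∈ E') := by
    rcases Q i (fun j => build Q x E' (Fin.castLE i.isLt.le j)) x with _|_ <;>
      simp_all
  simpa using this

theorem stmt3 (k H μ : ℕ) (hH : 2 * H ≤ k) (hμ : 2 ^ k < μ * S k H)
    (Q : (i : Fin k) → (Fin i.1 → Bool) → Fin μ → Bool)
    (out : (Fin k → Bool) → Fin μ) :
    ∃ (x : Fin μ) (r : Fin k → Bool), HValid H Q x r ∧ out r ≠ x := by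
  by_contra hcon
  push_neg at hcon
  -- hcon : ∀ x r, HValid H Q x r → out r = x
  set A : Finset (Finset (Fin k)) :=
    (Finset.range (H + 1)).biUnion (fun j => Finset.powersetCard j Finset.univ) with hA
  have hAcard : A.card = S k H := by
    rw [hA, Finset.card_biUnion]
    · unfold S
      apply Finset.sum_congr rfl
      intro j _
      rw [Finset.card_powersetCard]
      simp
    · intro a _ b _ hab
      apply Finset.disjoint_left.mpr
      intro s hs hs'
      simp only [Finset.mem_powersetCard] at hs hs'
      exact hab (hs.2 ▸ hs'.2 ▸ rfl)
  have hmemA : ∀ E ∈ A, E.card ≤ H := by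
    intro E hE
    rw [hA] at hE
    simp only [Finset.mem_biUnion, Finset.mem_range, Finset.mem_powersetCard] at hE
    obtain ⟨j, hj, _, hc⟩ := hE
    omega
  have hvalid : ∀ (x : Fin μ), ∀ E ∈ A, HValid H Q x (build Q x E) := by
    intro x E hE
    unfold HValid
    rw [errCount_build]
    exact hmemA E hE
  have hinj : Set.InjOn (fun p : Fin μ × Finset (Fin k) => build Q p.1 p.2)
      ((Finset.univ ×ˢ A : Finset (Fin μ × Finset (Fin k))) : Set (Fin μ × Finset (Fin k))) := by
    intro p hp q hq hpq
    simp only [Finset.coe_product, Set.mem_prod, Finset.mem_coe, Finset.mem_univ,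
      true_and] at hp hq
    have hx : p.1 = q.1 := by
      have e1 := hcon p.1 (build Q p.1 p.2) (hvalid p.1 p.2 hp)
      have e2 := hcon q.1 (build Q q.1 q.2) (hvalid q.1 q.2 hq)
      rw [← e1, ← e2]
      exact congrArg out hpq
    have hE : p.2 = q.2 := by
      have hb : build Q p.1 p.2 = build Q q.1 q.2 := hpq
      rw [← hx] at hb
      exact build_inj Q p.1 _ _ hb
    exact Prod.ext hx hE
  have hle := Finset.card_le_card_of_injOn
      (fun p : Fin μ × Finset (Fin k) => build Q p.1 p.2)
      (fun p _ => Finset.mem_univ _) hinj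
  rw [Finset.card_product, Finset.card_univ, Fintype.card_fin, hAcard] at hle
  have h2 : (Finset.univ : Finset (Fin k → Bool)).card = 2 ^ k := by
    simp [Finset.card_univ]
  rw [h2] at hle
  omega
end

section
/- Let n ≥ 1 and let k, H be natural numbers with 2H ≤ k. For a hidden index x ∈ Fin n, define the cyclic array A_x : Fin n → ℕ by A_x(i) = (i − x) mod n (so that A_x is a cyclic permutation of {0,…,n−1} with A_x(x) = 0). There exists an adaptive comparison-query strategy with k queries over D = Fin n (each query asks 'is x ≤ b' for an adaptively chosen b ∈ Fin n) with an output map out : (Fin k → Bool) → Fin n such that for every x ∈ Fin n and every response vector r that is H-valid for x, A_x(out r) ≤ ⌈n · S(k−H,H)/2^{k−H}⌉. -/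
namespace Stmt4Proof

open Finset

/-! ### Binomial sum lemmas -/

lemma S_zero_left (h : ℕ) : S 0 h = 1 := by
  induction h with
  | zero => simp [S]
  | succ h ih =>
      rw [S, Finset.sum_range_succ, ← S, ih, Nat.choose_zero_succ]

lemma S_succ_top (m h : ℕ) : S m (h + 1) = S m h + m.choose (h + 1) := by
  rw [S, Finset.sum_range_succ, ← S]

lemma S_pascal (m h : ℕ) : S (m + 1) (h + 1) = S m (h + 1) + S m h := by
  induction h with
  | zero =>
      simp [S, Finset.sum_range_succ]
      omega
  | succ h ih =>
      rw [S_succ_top, ih, S_succ_top, S_succ_top]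
      have h3 : (m + 1).choose (h + 1 + 1) = m.choose (h + 1) + m.choose (h + 1 + 1) :=
        Nat.choose_succ_succ m (h + 1)
      have h4 := S_succ_top m h
      omega

lemma S_pos (m h : ℕ) : 1 ≤ S m h := by
  have : m.choose 0 ≤ S m h := by
    rw [S]
    exact Finset.single_le_sum (f := fun j => m.choose j) (fun _ _ => Nat.zero_le _)
      (Finset.mem_range.2 (Nat.succ_pos h))
  simpa using this

/-! ### Weights -/

def w (H m l : ℕ) : ℕ := if l ≤ H then S m (H - l) else 0

def cC (H m l : ℕ) : ℕ := if l ≤ H then m.choose (H - l) else 0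

lemma w_pascal (H m l : ℕ) : w H (m + 1) l = w H m l + w H m (l + 1) := by
  unfold w
  rcases lt_trichotomy l H with h | h | h
  · rw [if_pos h.le, if_pos h.le, if_pos (show l + 1 ≤ H by omega)]
    obtain ⟨d, hd⟩ : ∃ d, H - l = d + 1 := ⟨H - l - 1, by omega⟩
    have h2 : H - (l + 1) = d := by omega
    rw [hd, h2, S_pascal]
  · subst h
    rw [if_pos le_rfl, if_pos le_rfl, if_neg (by omega)]
    simp [S, Nat.sub_self]
  · rw [if_neg (by omega), if_neg (by omega), if_neg (by omega)]

lemma w_step (H m l : ℕ) : w H m l = w H m (l + 1) + cC H m l := by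
  unfold w cC
  rcases lt_trichotomy l H with h | h | h
  · rw [if_pos h.le, if_pos (show l + 1 ≤ H by omega), if_pos h.le]
    obtain ⟨d, hd⟩ : ∃ d, H - l = d + 1 := ⟨H - l - 1, by omega⟩
    have h2 : H - (l + 1) = d := by omega
    rw [hd, h2, S_succ_top]
  · subst h
    rw [if_pos le_rfl, if_neg (by omega), if_pos le_rfl, Nat.sub_self]
    simp [S]
  · rw [if_neg (by omega), if_neg (by omega), if_neg (by omega)]

lemma w_anti (H m l : ℕ) : w H m (l + 1) ≤ w H m l := by
  conv_rhs => rw [w_step H m l]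
  exact Nat.le_add_right _ _

lemma w_anti' (H m : ℕ) {l l' : ℕ} (h : l ≤ l') : w H m l' ≤ w H m l := by
  induction l' with
  | zero =>
      have : l = 0 := by omega
      subst this; rfl
  | succ l' ih =>
      rcases Nat.lt_or_ge l (l' + 1) with h2 | h2
      · exact le_trans (w_anti H m l') (ih (by omega))
      · have : l = l' + 1 := by omega
        subst this; rfl

lemma w_zero (H l : ℕ) : w H 0 l = if l ≤ H then 1 else 0 := by
  unfold w
  split <;> simp [S_zero_left]

lemma w_top (H m : ℕ) : w H m 0 = S m H := by simp [w]

/-! ### Potentials -/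

def stepE (p : ℕ) (b : Bool) (e : ℕ → ℕ) : ℕ → ℕ :=
  fun y => if decide (y < p) = b then e y else e y + 1

def Phi (n H m : ℕ) (e : ℕ → ℕ) : ℕ := ∑ y ∈ Finset.range n, w H m (e y)

def Ff (n H m : ℕ) (e : ℕ → ℕ) (p : ℕ) : ℕ :=
  ∑ y ∈ Finset.range n, if y < p then w H m (e y) else w H m (e y + 1)

lemma Phi_yes (n H m : ℕ) (e : ℕ → ℕ) (p : ℕ) :
    Phi n H m (stepE p true e) = Ff n H m e p := by
  apply Finset.sum_congr rfl
  intro y _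
  by_cases h : y < p <;> simp [stepE, h]

lemma Phi_no_add (n H m : ℕ) (e : ℕ → ℕ) (p : ℕ) :
    Ff n H m e p + Phi n H m (stepE p false e) = Phi n H (m + 1) e := by
  unfold Ff Phi
  rw [← Finset.sum_add_distrib]
  apply Finset.sum_congr rfl
  intro y _
  by_cases h : y < p <;> simp [stepE, h, w_pascal] <;> omega

lemma Phi_stepE_le (n H m : ℕ) (e : ℕ → ℕ) (p : ℕ) (b : Bool) :
    Phi n H m (stepE p b e) ≤ Phi n H m e := by
  apply Finset.sum_le_sum
  intro y _
  unfold stepE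
  split
  · exact le_rfl
  · exact w_anti H m (e y)

lemma Phi_bad (n H m : ℕ) (e : ℕ → ℕ) (p : ℕ) (b : Bool) (y0 : ℕ)
    (hy0 : y0 < n) (hmem : decide (y0 < p) ≠ b) :
    Phi n H m (stepE p b e) + cC H m (e y0) ≤ Phi n H m e := by
  classical
  have key : (∑ y ∈ Finset.range n, (w H m (stepE p b e y) + if y = y0 then cC H m (e y0) else 0))
      ≤ Phi n H m e := by
    apply Finset.sum_le_sum
    intro y _
    by_cases hy : y = y0
    · subst hy
      have e1 : stepE p b e y = e y + 1 := by unfold stepE; rw [if_neg hmem]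
      rw [e1, if_pos rfl, w_step H m (e y)]
    · rw [if_neg hy, add_zero]
      unfold stepE
      split
      · exact le_rfl
      · exact w_anti H m (e y)
  rw [Finset.sum_add_distrib, Finset.sum_ite_eq' (Finset.range n) y0] at key
  rw [if_pos (Finset.mem_range.2 hy0)] at key
  exact key

lemma Ff_succ (n H m : ℕ) (e : ℕ → ℕ) (p : ℕ) (hp : p < n) :
    Ff n H m e (p + 1) = Ff n H m e p + cC H m (e p) := by
  classical
  unfold Ff
  have : ∀ y ∈ Finset.range n,
      (if y < p + 1 then w H m (e y) else w H m (e y + 1)) =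
      (if y < p then w H m (e y) else w H m (e y + 1)) + (if y = p then cC H m (e p) else 0) := by
    intro y _
    rcases lt_trichotomy y p with h | h | h
    · rw [if_pos (by omega), if_pos h, if_neg (by omega), add_zero]
    · subst h
      rw [if_pos (by omega), if_neg (by omega), if_pos rfl, ← w_step]
    · rw [if_neg (by omega), if_neg (by omega), if_neg (by omega), add_zero]
  rw [Finset.sum_congr rfl this, Finset.sum_add_distrib,
    Finset.sum_ite_eq' (Finset.range n) p, if_pos (Finset.mem_range.2 hp)]

lemma Ff_mono (n H m : ℕ) (e : ℕ → ℕ) : Monotone (Ff n H m e) := by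
  apply monotone_nat_of_le_succ
  intro p
  rcases Nat.lt_or_ge p n with hp | hp
  · rw [Ff_succ n H m e p hp]; omega
  · apply le_of_eq
    apply Finset.sum_congr rfl
    intro y hy
    have := Finset.mem_range.1 hy
    rw [if_pos (by omega), if_pos (by omega)]

lemma Phi_F0 (n H m : ℕ) (e : ℕ → ℕ) :
    Phi n H (m + 1) e = 2 * Ff n H m e 0 + ∑ y ∈ Finset.range n, cC H m (e y) := by
  unfold Phi Ff
  rw [Finset.mul_sum, ← Finset.sum_add_distrib]
  apply Finset.sum_congr rfl
  intro y _
  rw [if_neg (by omega), w_pascal]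
  have := w_step H m (e y)
  omega

lemma F0_le (n H m : ℕ) (e : ℕ → ℕ) : 2 * Ff n H m e 0 ≤ Phi n H (m + 1) e := by
  rw [Phi_F0]; omega

/-! ### Bottom of a valley -/

noncomputable def lvm (n : ℕ) (e : ℕ → ℕ) : ℕ := sInf (e '' {y | y < n})

noncomputable def Ab (n : ℕ) (e : ℕ → ℕ) : ℕ := sInf {y | y < n ∧ e y = lvm n e}

noncomputable def Bb (n : ℕ) (e : ℕ → ℕ) : ℕ := sSup {y | y < n ∧ e y = lvm n e}

lemma lvm_le {n : ℕ} (e : ℕ → ℕ) {y : ℕ} (hy : y < n) : lvm n e ≤ e y :=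
  Nat.sInf_le ⟨y, hy, rfl⟩

lemma botSet_nonempty {n : ℕ} (e : ℕ → ℕ) (hn : 0 < n) :
    {y | y < n ∧ e y = lvm n e}.Nonempty := by
  have h1 : (e '' {y | y < n}).Nonempty := ⟨e 0, 0, hn, rfl⟩
  obtain ⟨y, hy, hv⟩ := Nat.sInf_mem h1
  exact ⟨y, hy, hv⟩

lemma Ab_mem {n : ℕ} (e : ℕ → ℕ) (hn : 0 < n) : Ab n e < n ∧ e (Ab n e) = lvm n e :=
  Nat.sInf_mem (botSet_nonempty e hn)

lemma Bb_mem {n : ℕ} (e : ℕ → ℕ) (hn : 0 < n) : Bb n e < n ∧ e (Bb n e) = lvm n e := by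
  have hb : BddAbove {y | y < n ∧ e y = lvm n e} := ⟨n, fun y hy => hy.1.le⟩
  exact Nat.sSup_mem (botSet_nonempty e hn) hb

lemma Ab_le {n : ℕ} (e : ℕ → ℕ) {y : ℕ} (hy : y < n) (hv : e y = lvm n e) : Ab n e ≤ y :=
  Nat.sInf_le ⟨hy, hv⟩

lemma le_Bb {n : ℕ} (e : ℕ → ℕ) {y : ℕ} (hy : y < n) (hv : e y = lvm n e) : y ≤ Bb n e :=
  le_csSup ⟨n, fun z hz => hz.1.le⟩ ⟨hy, hv⟩

lemma Ab_le_Bb {n : ℕ} (e : ℕ → ℕ) (hn : 0 < n) : Ab n e ≤ Bb n e :=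
  le_Bb e (Ab_mem e hn).1 (Ab_mem e hn).2

lemma lt_Ab_ne {n : ℕ} (e : ℕ → ℕ) {y : ℕ} (hy : y < n) (h : y < Ab n e) : lvm n e < e y := by
  have h1 := lvm_le e hy
  rcases h1.lt_or_eq with h2 | h2
  · exact h2
  · exact absurd (Ab_le e hy h2.symm) (by omega)

lemma Bb_lt_ne {n : ℕ} (e : ℕ → ℕ) {y : ℕ} (hy : y < n) (h : Bb n e < y) : lvm n e < e y := by
  have h1 := lvm_le e hy
  rcases h1.lt_or_eq with h2 | h2
  · exact h2
  · exact absurd (le_Bb e hy h2.symm) (by omega)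

/-! ### Valley -/

def Valley (n : ℕ) (e : ℕ → ℕ) : Prop :=
  ∃ p, p < n ∧ (∀ i j, i ≤ j → j ≤ p → e j ≤ e i) ∧ (∀ i j, p ≤ i → i ≤ j → j < n → e i ≤ e j)

lemma valley_pivot_mem {n : ℕ} {e : ℕ → ℕ} (hn : 0 < n) (hV : Valley n e) :
    ∃ p, p < n ∧ Ab n e ≤ p ∧ p ≤ Bb n e ∧
      (∀ i j, i ≤ j → j ≤ p → e j ≤ e i) ∧ (∀ i j, p ≤ i → i ≤ j → j < n → e i ≤ e j) := by
  obtain ⟨p, hpn, hL, hR⟩ := hV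
  refine ⟨p, hpn, ?_, ?_, hL, hR⟩
  · -- Ab ≤ p
    by_contra h
    push_neg at h
    have hA := Ab_mem e hn
    have : e p ≤ e (Ab n e) := hR p (Ab n e) le_rfl h.le hA.1
    have : e p = lvm n e := le_antisymm (hA.2 ▸ this) (lvm_le e hpn)
    exact absurd (Ab_le e hpn this) (by omega)
  · -- p ≤ Bb
    by_contra h
    push_neg at h
    have hB := Bb_mem e hn
    have : e p ≤ e (Bb n e) := hL (Bb n e) p h.le le_rfl
    have : e p = lvm n e := le_antisymm (hB.2 ▸ this) (lvm_le e hpn)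
    exact absurd (le_Bb e hpn this) (by omega)

lemma valley_bot {n : ℕ} {e : ℕ → ℕ} (hn : 0 < n) (hV : Valley n e) :
    ∀ y, Ab n e ≤ y → y ≤ Bb n e → e y = lvm n e := by
  obtain ⟨p, hpn, hAp, hpB, hL, hR⟩ := valley_pivot_mem hn hV
  intro y hAy hyB
  have hBn := (Bb_mem e hn).1
  have hyn : y < n := by omega
  rcases le_or_gt y p with h | h
  · have := hL (Ab n e) y hAy h
    have h2 := lvm_le e hyn
    rw [(Ab_mem e hn).2] at this
    omega
  · have := hR y (Bb n e) h.le hyB hBn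
    have h2 := lvm_le e hyn
    rw [(Bb_mem e hn).2] at this
    omega

lemma valley_monoL {n : ℕ} {e : ℕ → ℕ} (hn : 0 < n) (hV : Valley n e) :
    ∀ i j, i ≤ j → j ≤ Bb n e → e j ≤ e i := by
  obtain ⟨p, hpn, hAp, hpB, hL, hR⟩ := valley_pivot_mem hn hV
  have hBn := (Bb_mem e hn).1
  intro i j hij hjB
  rcases le_or_gt j p with h | h
  · exact hL i j hij h
  · -- p < j ≤ B : e j = lvm ≤ e i
    have hjn : j < n := by omega
    have hj : e j = lvm n e := by
      have h1 := hR j (Bb n e) h.le hjB hBn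
      have h2 := lvm_le e hjn
      have h3 : e (Bb n e) = lvm n e := (Bb_mem e hn).2
      omega
    rw [hj]
    exact lvm_le e (show i < n by omega)

lemma valley_monoR {n : ℕ} {e : ℕ → ℕ} (hn : 0 < n) (hV : Valley n e) :
    ∀ i j, Ab n e ≤ i → i ≤ j → j < n → e i ≤ e j := by
  obtain ⟨p, hpn, hAp, hpB, hL, hR⟩ := valley_pivot_mem hn hV
  intro i j hAi hij hjn
  rcases le_or_gt p i with h | h
  · exact hR i j h hij hjn
  · have hi : e i = lvm n e := by
      have h1 := hL (Ab n e) i hAi h.le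
      have h2 := lvm_le e (show i < n by omega)
      have h3 : e (Ab n e) = lvm n e := (Ab_mem e hn).2
      omega
    rw [hi]
    exact lvm_le e hjn

lemma stepE_eval (p : ℕ) (b : Bool) (e : ℕ → ℕ) (y : ℕ) :
    stepE p b e y = if decide (y < p) = b then e y else e y + 1 := rfl

lemma valley_no {n : ℕ} {e : ℕ → ℕ} (hn : 0 < n) (hV : Valley n e) {p : ℕ}
    (hp : p ≤ Bb n e + 1) : Valley n (stepE p false e) := by
  have key : ∀ y, (y < p → stepE p false e y = e y + 1) ∧ (p ≤ y → stepE p false e y = e y) := by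
    intro y
    constructor <;> intro h <;> rw [stepE_eval]
    · rw [if_neg (by simp [h])]
    · rw [if_pos (by simp; omega)]
  refine ⟨Bb n e, (Bb_mem e hn).1, ?_, ?_⟩
  · intro i j hij hjB
    have h1 := valley_monoL hn hV i j hij hjB
    by_cases hi : i < p <;> by_cases hj : j < p
    · rw [(key i).1 hi, (key j).1 hj]; omega
    · rw [(key i).1 hi, (key j).2 (by omega)]; omega
    · omega
    · rw [(key i).2 (by omega), (key j).2 (by omega)]; omega
  · intro i j hBi hij hjn
    have h2 := valley_monoR hn hV i j (le_trans (Ab_le_Bb e hn) hBi) hij hjn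
    by_cases hi : i < p <;> by_cases hj : j < p
    · rw [(key i).1 hi, (key j).1 hj]; omega
    · -- i < p ≤ j, B ≤ i : so i = B, p = B + 1
      have hiB : i = Bb n e := by omega
      have hj2 : Bb n e < j := by omega
      have h3 := Bb_lt_ne e hjn hj2
      have hB : e i = lvm n e := by rw [hiB]; exact (Bb_mem e hn).2
      rw [(key i).1 hi, (key j).2 (by omega)]
      omega
    · omega
    · rw [(key i).2 (by omega), (key j).2 (by omega)]; omega

lemma valley_yes {n : ℕ} {e : ℕ → ℕ} (hn : 0 < n) (hV : Valley n e) {p : ℕ}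
    (hp : Ab n e ≤ p) : Valley n (stepE p true e) := by
  have key : ∀ y, (y < p → stepE p true e y = e y) ∧ (p ≤ y → stepE p true e y = e y + 1) := by
    intro y
    constructor <;> intro h <;> rw [stepE_eval]
    · rw [if_pos (by simp [h])]
    · rw [if_neg (by simp; omega)]
  have hAn := (Ab_mem e hn).1
  refine ⟨Ab n e, hAn, ?_, ?_⟩
  · intro i j hij hjA
    have h1 := valley_monoL hn hV i j hij (le_trans hjA (Ab_le_Bb e hn))
    by_cases hi : i < p <;> by_cases hj : j < p
    · rw [(key i).1 hi, (key j).1 hj]; omega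
    · -- i < p, j ≥ p, j ≤ A ≤ p : j = p = A, i < A or i = A
      have hjA2 : j = Ab n e := by omega
      rcases Nat.lt_or_ge i (Ab n e) with h2 | h2
      · have h3 := lt_Ab_ne e (show i < n by omega) h2
        have hA : e j = lvm n e := by rw [hjA2]; exact (Ab_mem e hn).2
        rw [(key i).1 hi, (key j).2 (by omega)]
        omega
      · omega
    · omega
    · rw [(key i).2 (by omega), (key j).2 (by omega)]; omega
  · intro i j hAi hij hjn
    have h2 := valley_monoR hn hV i j hAi hij hjn
    by_cases hi : i < p <;> by_cases hj : j < p
    · rw [(key i).1 hi, (key j).1 hj]; omega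
    · rw [(key i).1 hi, (key j).2 (by omega)]; omega
    · omega
    · rw [(key i).2 (by omega), (key j).2 (by omega)]; omega

/-! ### Level of the new state -/

lemma lvm_ge_step {n : ℕ} (e : ℕ → ℕ) (hn : 0 < n) (p : ℕ) (b : Bool) :
    lvm n e ≤ lvm n (stepE p b e) := by
  obtain ⟨y, hy, hv⟩ := botSet_nonempty (stepE p b e) hn
  rw [← hv]
  refine le_trans (lvm_le e hy) ?_
  unfold stepE
  split <;> omega

lemma lvm_eq_of {n : ℕ} (e : ℕ → ℕ) (c : ℕ) (hlb : ∀ y, y < n → c ≤ e y)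
    (hw : ∃ y, y < n ∧ e y = c) : lvm n e = c := by
  obtain ⟨y, hy, hv⟩ := hw
  have h1 : lvm n e ≤ c := hv ▸ lvm_le e hy
  obtain ⟨z, hz, hv2⟩ := botSet_nonempty (n := n) e (by omega)
  have := hlb z hz
  omega

lemma lvm_same {n : ℕ} (e : ℕ → ℕ) (hn : 0 < n) {p : ℕ} {b : Bool} {y0 : ℕ}
    (hy0 : y0 < n) (hval : e y0 = lvm n e) (huntouched : decide (y0 < p) = b) :
    lvm n (stepE p b e) = lvm n e := by
  apply lvm_eq_of
  · intro y hy
    have := lvm_le e hy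
    unfold stepE
    split <;> omega
  · exact ⟨y0, hy0, by unfold stepE; rw [if_pos huntouched]; exact hval⟩

lemma lvm_bad {n : ℕ} (e : ℕ → ℕ) (hn : 0 < n) {p : ℕ} {b : Bool}
    (hcov : ∀ y, y < n → e y = lvm n e → decide (y < p) ≠ b) :
    lvm n (stepE p b e) = lvm n e + 1 := by
  apply lvm_eq_of
  · intro y hy
    have h1 := lvm_le e hy
    unfold stepE
    rcases h1.lt_or_eq with h2 | h2
    · split <;> omega
    · rw [if_neg (hcov y hy h2.symm)]
      omega
  · obtain ⟨y, hy, hv⟩ := botSet_nonempty e hn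
    refine ⟨y, hy, ?_⟩
    unfold stepE
    rw [if_neg (hcov y hy hv), hv]

/-! ### The query cut -/

noncomputable def cutRaw (n H : ℕ) (e : ℕ → ℕ) (m : ℕ) : ℕ :=
  if m = 0 then Bb n e + 1 else
  let P := Phi n H m e
  let F := Ff n H (m - 1) e
  let A := Ab n e
  let B := Bb n e
  let c := cC H (m - 1) (lvm n e)
  let ps := Nat.findGreatest (fun p => 2 * F p ≤ P) n
  if ps < A then A
  else if ps = A then (if 1 ≤ A ∧ P ≤ 2 * F A + c then A else A + 1)
  else if ps ≤ B then (if P ≤ F ps + F (ps + 1) then ps else ps + 1)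
  else B + 1

noncomputable def cut (n H : ℕ) (e : ℕ → ℕ) (m : ℕ) : ℕ :=
  max 1 (min (cutRaw n H e m) n)

lemma cut_pos (n H : ℕ) (e : ℕ → ℕ) (m : ℕ) : 1 ≤ cut n H e m := le_max_left _ _

lemma cut_le (n H : ℕ) (e : ℕ → ℕ) (m : ℕ) (hn : 0 < n) : cut n H e m ≤ n := by
  unfold cut; omega

lemma cut_spec (n H : ℕ) (e : ℕ → ℕ) (m : ℕ) (hn : 0 < n) (hV : Valley n e) :
    (m = 0 ∧ cut n H e m = Bb n e + 1) ∨
    (1 ≤ m ∧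
      ((cut n H e m = Ab n e ∧
          Phi n H m e ≤ 2 * Ff n H (m - 1) e (cut n H e m) + cC H (m - 1) (lvm n e)) ∨
       (Ab n e < cut n H e m ∧ cut n H e m ≤ Bb n e ∧
          2 * Ff n H (m - 1) e (cut n H e m) ≤ Phi n H m e + cC H (m - 1) (lvm n e) ∧
          Phi n H m e ≤ 2 * Ff n H (m - 1) e (cut n H e m) + cC H (m - 1) (lvm n e)) ∨
       (cut n H e m = Bb n e + 1 ∧
          2 * Ff n H (m - 1) e (cut n H e m) ≤ Phi n H m e + cC H (m - 1) (lvm n e)))) := by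
  classical
  rcases Nat.eq_zero_or_pos m with hm0 | hm1
  · left
    subst hm0
    refine ⟨rfl, ?_⟩
    have hBn := (Bb_mem e hn).1
    unfold cut cutRaw
    rw [if_pos rfl]
    omega
  · right
    refine ⟨hm1, ?_⟩
    obtain ⟨m', rfl⟩ : ∃ m', m = m' + 1 := ⟨m - 1, by omega⟩
    simp only [Nat.add_sub_cancel]
    have hAmem := Ab_mem e hn
    have hBmem := Bb_mem e hn
    have hABle := Ab_le_Bb e hn
    set μ := lvm n e with hμ
    set A := Ab n e with hA
    set B := Bb n e with hB
    set P := Phi n H (m' + 1) e with hP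
    set F := Ff n H m' e with hF
    set c := cC H m' μ with hc
    have hps0 : 2 * F 0 ≤ P := F0_le n H m' e
    set ps := Nat.findGreatest (fun p => 2 * F p ≤ P) n with hpsdef
    have hpsp : 2 * F ps ≤ P :=
      Nat.findGreatest_spec (P := fun p => 2 * F p ≤ P) (Nat.zero_le n) hps0
    have hpsn : ps ≤ n := Nat.findGreatest_le (P := fun p => 2 * F p ≤ P) n
    have hmax : ∀ q, ps < q → q ≤ n → ¬ (2 * F q ≤ P) :=
      fun q h1 h2 => Nat.findGreatest_is_greatest (P := fun p => 2 * F p ≤ P) h1 h2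
    have hFsucc : ∀ q, q < n → F (q + 1) = F q + cC H m' (e q) :=
      fun q hq => Ff_succ n H m' e q hq
    have hFmono : ∀ q q', q ≤ q' → F q ≤ F q' := fun q q' h => Ff_mono n H m' e h
    have hbot := valley_bot hn hV
    have heA : e A = μ := hAmem.2
    have heB : e B = μ := hBmem.2
    -- the sum lower bound used when A = 0
    have hsumA : 2 * F 0 + c ≤ P := by
      rw [hP, Phi_F0]
      have h1 : cC H m' (e A) ≤ ∑ y ∈ Finset.range n, cC H m' (e y) :=
        Finset.single_le_sum (f := fun y => cC H m' (e y)) (fun _ _ => Nat.zero_le _)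
          (Finset.mem_range.2 hAmem.1)
      rw [heA] at h1
      rw [hF] at *
      omega
    have hraw : cutRaw n H e (m' + 1) =
        (if ps < A then A
         else if ps = A then (if 1 ≤ A ∧ P ≤ 2 * F A + c then A else A + 1)
         else if ps ≤ B then (if P ≤ F ps + F (ps + 1) then ps else ps + 1)
         else B + 1) := by
      unfold cutRaw
      rw [if_neg (Nat.succ_ne_zero m')]
      simp only [Nat.add_sub_cancel]
      rfl
    have hcutv : ∀ v : ℕ, cutRaw n H e (m' + 1) = v → 1 ≤ v → v ≤ n →
        cut n H e (m' + 1) = v := by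
      intro v hv h1 h2
      unfold cut
      rw [hv]
      omega
    by_cases h1 : ps < A
    · -- R1
      rw [if_pos h1] at hraw
      have hcut := hcutv A hraw (by omega) (by omega)
      left
      refine ⟨hcut, ?_⟩
      rw [hcut]
      have := hmax A h1 (by omega)
      omega
    · rw [if_neg h1] at hraw
      by_cases h2 : ps = A
      · rw [if_pos h2] at hraw
        by_cases h3 : 1 ≤ A ∧ P ≤ 2 * F A + c
        · rw [if_pos h3] at hraw
          have hcut := hcutv A hraw (by omega) (by omega)
          left
          refine ⟨hcut, ?_⟩
          rw [hcut]
          exact h3.2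
        · rw [if_neg h3] at hraw
          have hcut := hcutv (A + 1) hraw (by omega) (by omega)
          -- key: 2 * F A + c ≤ P
          have hkey : 2 * F A + c ≤ P := by
            rcases Nat.eq_zero_or_pos A with hA0 | hApos
            · rw [hA0]; exact hsumA
            · rcases not_and_or.1 h3 with h | h
              · omega
              · omega
          have hFA1 : F (A + 1) = F A + c := by
            rw [hFsucc A hAmem.1, heA]
          rcases Nat.lt_or_ge B (A + 1) with hBA | hBA
          · -- B = A, cut = B + 1 : RIGHT
            have hBA2 : B = A := by omega
            right; right
            rw [hcut, hBA2]
            refine ⟨rfl, ?_⟩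
            rw [hFA1]
            omega
          · -- MID
            right; left
            rw [hcut]
            have hmax2 := hmax (A + 1) (by omega) (by omega)
            rw [hFA1]
            refine ⟨by omega, hBA, by omega, by omega⟩
      · rw [if_neg h2] at hraw
        have hAps : A < ps := by omega
        by_cases h4 : ps ≤ B
        · rw [if_pos h4] at hraw
          have heps : e ps = μ := hbot ps (by omega) h4
          have hFps1 : F (ps + 1) = F ps + c := by
            rw [hFsucc ps (by omega), heps]
          by_cases h5 : P ≤ F ps + F (ps + 1)
          · rw [if_pos h5] at hraw
            have hcut := hcutv ps hraw (by omega) (by omega)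
            right; left
            rw [hcut]
            refine ⟨hAps, h4, by omega, by omega⟩
          · rw [if_neg h5] at hraw
            have hcut := hcutv (ps + 1) hraw (by omega) (by omega)
            rcases Nat.lt_or_ge B (ps + 1) with hBps | hBps
            · -- ps = B, cut = B + 1 : RIGHT
              have hBps2 : ps = B := by omega
              right; right
              rw [hcut, hBps2]
              refine ⟨rfl, ?_⟩
              rw [← hBps2, hFps1]
              omega
            · right; left
              rw [hcut]
              have hmax2 := hmax (ps + 1) (by omega) (by omega)
              refine ⟨by omega, hBps, by omega, by omega⟩
        · rw [if_neg h4] at hraw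
          have hcut := hcutv (B + 1) hraw (by omega) (by omega)
          right; right
          rw [hcut]
          refine ⟨rfl, ?_⟩
          have := hFmono (B + 1) ps (by omega)
          omega

/-! ### Main step lemma -/

lemma step_main (n H : ℕ) (e : ℕ → ℕ) (m : ℕ) (hn : 0 < n) (hV : Valley n e) (b : Bool) :
    Valley n (stepE (cut n H e m) b e) ∧
    ((lvm n (stepE (cut n H e m) b e) = lvm n e ∧
        Phi n H m (stepE (cut n H e m) b e) ≤ Phi n H m e ∧
        (1 ≤ m → 2 * Phi n H (m - 1) (stepE (cut n H e m) b e) ≤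
          Phi n H m e + cC H (m - 1) (lvm n e))) ∨
     (lvm n (stepE (cut n H e m) b e) = lvm n e + 1 ∧
        Phi n H m (stepE (cut n H e m) b e) + cC H m (lvm n e) ≤ Phi n H m e)) := by
  have hAmem := Ab_mem e hn
  have hBmem := Bb_mem e hn
  have hABle := Ab_le_Bb e hn
  rcases cut_spec n H e m hn hV with ⟨hm0, hcut⟩ | ⟨hm1, hsc⟩
  · -- m = 0
    subst hm0
    cases b
    · -- "no" : covers the bottom, bad step
      refine ⟨valley_no hn hV (by rw [hcut]), Or.inr ⟨?_, ?_⟩⟩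
      · apply lvm_bad e hn
        intro y hy hval
        have := le_Bb e hy hval
        rw [hcut]
        simp only [ne_eq, decide_eq_false_iff_not, not_not]
        omega
      · have h2 := Phi_bad n H 0 e (cut n H e 0) false (Bb n e) hBmem.1
          (by rw [hcut]; simp)
        rw [hBmem.2] at h2
        exact h2
    · -- "yes" : misses the bottom
      refine ⟨valley_yes hn hV (by rw [hcut]; omega),
        Or.inl ⟨?_, Phi_stepE_le _ _ _ _ _ _, ?_⟩⟩
      · exact lvm_same e hn hBmem.1 hBmem.2 (by rw [hcut]; simp)
      · intro h; omega
  · obtain ⟨m', rfl⟩ : ∃ m', m = m' + 1 := ⟨m - 1, by omega⟩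
    simp only [Nat.add_sub_cancel] at hsc ⊢
    set p := cut n H e (m' + 1) with hp
    have hno_bound : Phi n H (m' + 1) e ≤ 2 * Ff n H m' e p + cC H m' (lvm n e) →
        2 * Phi n H m' (stepE p false e) ≤ Phi n H (m' + 1) e + cC H m' (lvm n e) := by
      intro hb
      have := Phi_no_add n H m' e p
      omega
    rcases hsc with ⟨hcut, hineq⟩ | ⟨hc1, hc2, hg1, hg2⟩ | ⟨hcut, hgood⟩
    · -- LEFT : p = A
      cases b
      · -- "no" : good
        refine ⟨valley_no hn hV (by omega), Or.inl ⟨?_, Phi_stepE_le _ _ _ _ _ _,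
          fun _ => hno_bound hineq⟩⟩
        exact lvm_same e hn hAmem.1 hAmem.2 (by rw [hcut]; simp)
      · -- "yes" : bad
        refine ⟨valley_yes hn hV (by omega), Or.inr ⟨?_, ?_⟩⟩
        · apply lvm_bad e hn
          intro y hy hval
          have := Ab_le e hy hval
          rw [hcut]
          simp only [ne_eq, decide_eq_true_eq]
          omega
        · have h2 := Phi_bad n H (m' + 1) e p true (Ab n e) hAmem.1
            (by rw [hcut]; simp)
          rw [hAmem.2] at h2
          exact h2
    · -- MID
      cases b
      · refine ⟨valley_no hn hV (by omega), Or.inl ⟨?_, Phi_stepE_le _ _ _ _ _ _,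
          fun _ => hno_bound hg2⟩⟩
        apply lvm_same e hn hBmem.1 hBmem.2
        simp only [decide_eq_false_iff_not, not_lt]
        omega
      · refine ⟨valley_yes hn hV (by omega), Or.inl ⟨?_, Phi_stepE_le _ _ _ _ _ _,
          fun _ => ?_⟩⟩
        · apply lvm_same e hn hAmem.1 hAmem.2
          simp only [decide_eq_true_eq]
          omega
        · rw [Phi_yes]
          omega
    · -- RIGHT : p = B + 1
      cases b
      · -- "no" : bad
        refine ⟨valley_no hn hV (by omega), Or.inr ⟨?_, ?_⟩⟩
        · apply lvm_bad e hn
          intro y hy hval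
          have := le_Bb e hy hval
          rw [hcut]
          simp only [ne_eq, decide_eq_false_iff_not, not_not]
          omega
        · have h2 := Phi_bad n H (m' + 1) e p false (Bb n e) hBmem.1
            (by rw [hcut]; simp)
          rw [hBmem.2] at h2
          exact h2
      · -- "yes" : good
        refine ⟨valley_yes hn hV (by omega), Or.inl ⟨?_, Phi_stepE_le _ _ _ _ _ _,
          fun _ => ?_⟩⟩
        · exact lvm_same e hn hBmem.1 hBmem.2 (by rw [hcut]; simp)
        · rw [Phi_yes]
          omega

/-! ### Pascal doubling -/

lemma w_double (H m l : ℕ) : w H (m + 1) l + cC H m l = 2 * w H m l := by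
  rw [w_pascal]
  have := w_step H m l
  omega

/-! ### The state machine -/

noncomputable def state (n H N : ℕ) : ℕ → (ℕ → Bool) → ((ℕ → ℕ) × ℕ)
  | 0, _ => (fun _ => 0, N)
  | (i + 1), r =>
      let s := state n H N i r
      let e' := stepE (cut n H s.1 s.2) (r i) s.1
      (e', if lvm n e' = lvm n s.1 then s.2 - 1 else s.2)

lemma state_succ (n H N i : ℕ) (r : ℕ → Bool) :
    state n H N (i + 1) r =
      (stepE (cut n H (state n H N i r).1 (state n H N i r).2) (r i) (state n H N i r).1,
       if lvm n (stepE (cut n H (state n H N i r).1 (state n H N i r).2) (r i)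
            (state n H N i r).1) = lvm n (state n H N i r).1
       then (state n H N i r).2 - 1 else (state n H N i r).2) := rfl

lemma state_congr (n H N : ℕ) (i : ℕ) (r r' : ℕ → Bool)
    (h : ∀ j, j < i → r j = r' j) : state n H N i r = state n H N i r' := by
  induction i with
  | zero => rfl
  | succ i ih =>
      rw [state_succ, state_succ, ih (fun j hj => h j (by omega)), h i (by omega)]

lemma state_e (n H N : ℕ) (i : ℕ) (r : ℕ → Bool) (y : ℕ) :
    (state n H N i r).1 y = ∑ j ∈ Finset.range i,
      (if r j = decide (y < cut n H (state n H N j r).1 (state n H N j r).2) then 0 else 1) := by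
  induction i with
  | zero => simp [state]
  | succ i ih =>
      rw [Finset.sum_range_succ, ← ih, state_succ]
      simp only
      rw [stepE_eval]
      by_cases h : decide (y < cut n H (state n H N i r).1 (state n H N i r).2) = r i
      · rw [if_pos h, if_pos h.symm]
        omega
      · rw [if_neg h, if_neg (fun hh => h hh.symm)]

/-! ### Master invariant -/

lemma master_step (n H N : ℕ) (hn : 0 < n) (i : ℕ) (e : ℕ → ℕ) (m : ℕ) (b : Bool)
    (hV : Valley n e) (hmN : m ≤ N) (hclk : 1 ≤ m → i + m = N + lvm n e)
    (hinv : Phi n H m e * 2 ^ (N - m) ≤ n * S N H + 2 ^ (N - m) * w H m (lvm n e)) :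
    Valley n (stepE (cut n H e m) b e) ∧
    (if lvm n (stepE (cut n H e m) b e) = lvm n e then m - 1 else m) ≤ N ∧
    (1 ≤ (if lvm n (stepE (cut n H e m) b e) = lvm n e then m - 1 else m) →
      (i + 1) + (if lvm n (stepE (cut n H e m) b e) = lvm n e then m - 1 else m) =
        N + lvm n (stepE (cut n H e m) b e)) ∧
    Phi n H (if lvm n (stepE (cut n H e m) b e) = lvm n e then m - 1 else m)
        (stepE (cut n H e m) b e) *
      2 ^ (N - (if lvm n (stepE (cut n H e m) b e) = lvm n e then m - 1 else m))
      ≤ n * S N H +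
        2 ^ (N - (if lvm n (stepE (cut n H e m) b e) = lvm n e then m - 1 else m)) *
          w H (if lvm n (stepE (cut n H e m) b e) = lvm n e then m - 1 else m)
            (lvm n (stepE (cut n H e m) b e)) := by
  set μ := lvm n e with hμ
  set e' := stepE (cut n H e m) b e with he'
  obtain ⟨hV', hdich⟩ := step_main n H e m hn hV b
  rw [← he'] at hV' hdich
  rw [← hμ] at hdich
  rcases hdich with ⟨hlv, hmono, hbound⟩ | ⟨hlv, hbad⟩
  · -- good step
    rw [if_pos hlv] at *
    rw [hlv]
    refine ⟨hV', by omega, by intro h1; have := hclk (by omega); omega, ?_⟩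
    rcases Nat.eq_zero_or_pos m with hm0 | hm1
    · subst hm0
      simp only [Nat.zero_sub]
      calc Phi n H 0 e' * 2 ^ (N - 0) ≤ Phi n H 0 e * 2 ^ (N - 0) :=
            Nat.mul_le_mul_right _ hmono
        _ ≤ n * S N H + 2 ^ (N - 0) * w H 0 μ := hinv
    · have hb := hbound hm1
      obtain ⟨m', rfl⟩ : ∃ m', m = m' + 1 := ⟨m - 1, by omega⟩
      simp only [Nat.add_sub_cancel] at hb ⊢
      have hexp : N - m' = (N - (m' + 1)) + 1 := by omega
      have hdb := w_double H m' μ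
      calc Phi n H m' e' * 2 ^ (N - m')
          = (2 * Phi n H m' e') * 2 ^ (N - (m' + 1)) := by
            rw [hexp, pow_succ]; ring
        _ ≤ (Phi n H (m' + 1) e + cC H m' μ) * 2 ^ (N - (m' + 1)) :=
            Nat.mul_le_mul_right _ hb
        _ = Phi n H (m' + 1) e * 2 ^ (N - (m' + 1)) +
            cC H m' μ * 2 ^ (N - (m' + 1)) := by ring
        _ ≤ (n * S N H + 2 ^ (N - (m' + 1)) * w H (m' + 1) μ) +
            cC H m' μ * 2 ^ (N - (m' + 1)) := Nat.add_le_add_right hinv _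
        _ = n * S N H + 2 ^ (N - (m' + 1)) * (w H (m' + 1) μ + cC H m' μ) := by ring
        _ = n * S N H + 2 ^ (N - (m' + 1)) * (2 * w H m' μ) := by rw [hdb]
        _ = n * S N H + 2 ^ (N - m') * w H m' μ := by
            rw [hexp, pow_succ]; ring
  · -- bad step
    rw [if_neg (by omega)] at *
    rw [hlv]
    refine ⟨hV', hmN, by intro h1; have := hclk h1; omega, ?_⟩
    have hws := w_step H m μ
    calc Phi n H m e' * 2 ^ (N - m)
        ≤ (Phi n H m e - cC H m μ) * 2 ^ (N - m) := Nat.mul_le_mul_right _ (by omega)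
      _ = Phi n H m e * 2 ^ (N - m) - cC H m μ * 2 ^ (N - m) := by
          rw [Nat.sub_mul]
      _ ≤ (n * S N H + 2 ^ (N - m) * w H m μ) - cC H m μ * 2 ^ (N - m) :=
          Nat.sub_le_sub_right hinv _
      _ ≤ n * S N H + 2 ^ (N - m) * w H m (μ + 1) := by
          have h3 : 2 ^ (N - m) * w H m μ =
              2 ^ (N - m) * w H m (μ + 1) + cC H m μ * 2 ^ (N - m) := by
            rw [hws]; ring
          omega

lemma master (n H N : ℕ) (hn : 0 < n) (i : ℕ) (r : ℕ → Bool) :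
    Valley n (state n H N i r).1 ∧
    (state n H N i r).2 ≤ N ∧
    (1 ≤ (state n H N i r).2 →
      i + (state n H N i r).2 = N + lvm n (state n H N i r).1) ∧
    Phi n H (state n H N i r).2 (state n H N i r).1 * 2 ^ (N - (state n H N i r).2)
      ≤ n * S N H + 2 ^ (N - (state n H N i r).2) *
          w H (state n H N i r).2 (lvm n (state n H N i r).1) := by
  induction i with
  | zero =>
      have hV0 : Valley n (fun _ => 0) := ⟨0, hn, fun _ _ _ _ => le_rfl, fun _ _ _ _ _ => le_rfl⟩
      have hlv0 : lvm n (fun _ : ℕ => 0) = 0 :=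
        lvm_eq_of _ 0 (fun _ _ => le_rfl) ⟨0, hn, rfl⟩
      have hPhi0 : Phi n H N (fun _ => 0) = n * S N H := by
        unfold Phi
        rw [Finset.sum_const, Finset.card_range, w_top, smul_eq_mul]
      refine ⟨hV0, le_rfl, ?_, ?_⟩
      · intro _
        show 0 + N = N + lvm n (fun _ => 0)
        rw [hlv0]
        omega
      · show Phi n H N (fun _ => 0) * 2 ^ (N - N) ≤
          n * S N H + 2 ^ (N - N) * w H N (lvm n (fun _ => 0))
        rw [hPhi0, hlv0, Nat.sub_self, pow_zero, w_top]
        omega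
  | succ i ih =>
      obtain ⟨hV, hmN, hclk, hinv⟩ := ih
      rw [state_succ]
      exact master_step n H N hn i (state n H N i r).1 (state n H N i r).2 (r i)
        hV hmN hclk hinv

/-! ### Final extraction helpers -/

lemma Phi_zero_card (n H : ℕ) (e : ℕ → ℕ) :
    Phi n H 0 e = ((Finset.range n).filter (fun y => e y ≤ H)).card := by
  rw [Phi, Finset.card_filter]
  exact Finset.sum_congr rfl (fun y _ => by rw [w_zero])

lemma sublevel_interval {n H : ℕ} {e : ℕ → ℕ} (hV : Valley n e) {a z b : ℕ}
    (ha : a ≤ z) (hz : z ≤ b) (hbn : b < n) (hea : e a ≤ H) (heb : e b ≤ H) :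
    e z ≤ H := by
  obtain ⟨q, hqn, hL, hR⟩ := hV
  rcases le_or_gt z q with h | h
  · exact le_trans (hL a z ha h) hea
  · exact le_trans (hR z b h.le hz hbn) heb

/-! ### The strategy data -/

noncomputable def thrF (n H N : ℕ) (hn : 0 < n) (i : ℕ) (r : ℕ → Bool) : Fin n :=
  ⟨cut n H (state n H N i r).1 (state n H N i r).2 - 1, by
    have h1 := cut_le n H (state n H N i r).1 (state n H N i r).2 hn
    have h2 := cut_pos n H (state n H N i r).1 (state n H N i r).2
    omega⟩

def padF (i : ℕ) (h : Fin i → Bool) : ℕ → Bool :=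
  fun j => if hj : j < i then h ⟨j, hj⟩ else false

noncomputable def eFin (n H N k : ℕ) (r : Fin k → Bool) : ℕ → ℕ :=
  (state n H N k (padF k r)).1

noncomputable def outF (n H N k : ℕ) (hn : 0 < n) (r : Fin k → Bool) : Fin n :=
  if hs : (((Finset.range n).filter (fun y => eFin n H N k r y ≤ H))).Nonempty then
    ⟨((Finset.range n).filter (fun y => eFin n H N k r y ≤ H)).max' hs, by
      have h1 := Finset.max'_mem _ hs
      exact Finset.mem_range.1 (Finset.mem_filter.1 h1).1⟩
  else ⟨0, hn⟩

lemma fin_le_thr {n : ℕ} (x : Fin n) (c : ℕ) (hc1 : 1 ≤ c) (h : c - 1 < n) :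
    (decide (x ≤ (⟨c - 1, h⟩ : Fin n))) = decide (x.val < c) := by
  have hiff : (x ≤ (⟨c - 1, h⟩ : Fin n)) ↔ x.val < c := by
    rw [Fin.le_def]
    simp only
    omega
  simp [hiff]

lemma errCount_eq (n H N k : ℕ) (hn : 0 < n) (x : Fin n) (r : Fin k → Bool) :
    errCount (fun (i : Fin k) (h : Fin i.1 → Bool) (y : Fin n) =>
        decide (y ≤ thrF n H N hn i.1 (padF i.1 h))) x r
      = eFin n H N k r x.val := by
  classical
  unfold errCount eFin
  rw [Finset.card_filter, state_e]
  rw [← Fin.sum_univ_eq_sum_range (fun j => if padF k r j =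
      decide ((x : ℕ) < cut n H (state n H N j (padF k r)).1 (state n H N j (padF k r)).2)
      then 0 else 1) k]
  apply Finset.sum_congr rfl
  intro i _
  have hpad : padF k r i.1 = r i := by
    unfold padF
    rw [dif_pos i.isLt]
  have hstate : state n H N i.1 (padF i.1 (fun j => r (Fin.castLE i.isLt.le j)))
      = state n H N i.1 (padF k r) := by
    apply state_congr
    intro j hj
    unfold padF
    rw [dif_pos hj, dif_pos (show j < k by omega)]
    rfl
  have hQ : (decide (x ≤ thrF n H N hn i.1 (padF i.1 (fun j => r (Fin.castLE i.isLt.le j)))))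
      = decide ((x : ℕ) < cut n H (state n H N i.1 (padF k r)).1
          (state n H N i.1 (padF k r)).2) := by
    unfold thrF
    rw [fin_le_thr x _ (cut_pos _ _ _ _), hstate]
  simp only [hQ, hpad]
  by_cases hb : r i = decide ((x : ℕ) < cut n H (state n H N i.1 (padF k r)).1
      (state n H N i.1 (padF k r)).2)
  · rw [if_neg (not_not_intro hb), if_pos hb]
  · rw [if_pos hb, if_neg hb]

end Stmt4Proof

theorem stmt4 (n k H : ℕ) (hn : 1 ≤ n) (hH : 2 * H ≤ k) :
    ∃ (T : (i : Fin k) → (Fin i.1 → Bool) → Fin n)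
      (out : (Fin k → Bool) → Fin n),
      ∀ (x : Fin n) (r : Fin k → Bool),
        HValid H (fun i h (y : Fin n) => decide (y ≤ T i h)) x r →
        ((out r - x : Fin n) : ℕ) ≤ ⌈(n * S (k - H) H : ℝ) / 2 ^ (k - H)⌉₊ := by
  classical
  open Stmt4Proof in
  have hn0 : 0 < n := hn
  set N := k - H with hN
  refine ⟨fun i h => Stmt4Proof.thrF n H N hn0 i.1 (Stmt4Proof.padF i.1 h),
      Stmt4Proof.outF n H N k hn0, ?_⟩
  intro x r hvalid
  have hx : Stmt4Proof.eFin n H N k r x.val ≤ H := by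
    rw [← Stmt4Proof.errCount_eq n H N k hn0 x r]
    exact hvalid
  obtain ⟨hV, hmN, hclk, hinv⟩ := Stmt4Proof.master n H N hn0 k (Stmt4Proof.padF k r)
  have heq : (Stmt4Proof.state n H N k (Stmt4Proof.padF k r)).1 = Stmt4Proof.eFin n H N k r :=
    rfl
  rw [heq] at hV hclk hinv
  have hxn : x.val < n := x.isLt
  have hlvle : Stmt4Proof.lvm n (Stmt4Proof.eFin n H N k r) ≤ Stmt4Proof.eFin n H N k r x.val :=
    Stmt4Proof.lvm_le _ hxn
  have hm0 : (Stmt4Proof.state n H N k (Stmt4Proof.padF k r)).2 = 0 := by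
    by_contra hne
    have h1 := hclk (by omega)
    have h2 : Stmt4Proof.lvm n (Stmt4Proof.eFin n H N k r) ≤ H := le_trans hlvle hx
    omega
  rw [hm0, Nat.sub_zero, Stmt4Proof.Phi_zero_card] at hinv
  have hw0 : Stmt4Proof.w H 0 (Stmt4Proof.lvm n (Stmt4Proof.eFin n H N k r)) ≤ 1 := by
    rw [Stmt4Proof.w_zero]
    split <;> omega
  -- the survivor set
  have hxSv : x.val ∈ (Finset.range n).filter (fun y => Stmt4Proof.eFin n H N k r y ≤ H) :=
    Finset.mem_filter.2 ⟨Finset.mem_range.2 hxn, hx⟩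
  have hne : ((Finset.range n).filter (fun y => Stmt4Proof.eFin n H N k r y ≤ H)).Nonempty :=
    ⟨_, hxSv⟩
  have hMSv := Finset.max'_mem _ hne
  have hMn : ((Finset.range n).filter (fun y => Stmt4Proof.eFin n H N k r y ≤ H)).max' hne < n :=
    Finset.mem_range.1 (Finset.mem_filter.1 hMSv).1
  have heM : Stmt4Proof.eFin n H N k r
      (((Finset.range n).filter (fun y => Stmt4Proof.eFin n H N k r y ≤ H)).max' hne) ≤ H :=
    (Finset.mem_filter.1 hMSv).2
  have hxM : x.val ≤ ((Finset.range n).filter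
      (fun y => Stmt4Proof.eFin n H N k r y ≤ H)).max' hne :=
    Finset.le_max' _ _ hxSv
  have hIcc : Finset.Icc x.val (((Finset.range n).filter
      (fun y => Stmt4Proof.eFin n H N k r y ≤ H)).max' hne) ⊆
      (Finset.range n).filter (fun y => Stmt4Proof.eFin n H N k r y ≤ H) := by
    intro z hz
    obtain ⟨hz1, hz2⟩ := Finset.mem_Icc.1 hz
    exact Finset.mem_filter.2 ⟨Finset.mem_range.2 (by omega),
      Stmt4Proof.sublevel_interval hV hz1 hz2 hMn hx heM⟩
  have hcard : (((Finset.range n).filter (fun y => Stmt4Proof.eFin n H N k r y ≤ H)).max' hne)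
      + 1 - x.val ≤
      ((Finset.range n).filter (fun y => Stmt4Proof.eFin n H N k r y ≤ H)).card := by
    rw [← Nat.card_Icc]
    exact Finset.card_le_card hIcc
  set M := (((Finset.range n).filter (fun y => Stmt4Proof.eFin n H N k r y ≤ H)).max' hne)
    with hM
  set C := ((Finset.range n).filter (fun y => Stmt4Proof.eFin n H N k r y ≤ H)).card with hC
  -- numeric bound : (M - x) * 2^N ≤ n * S N H
  have key : (M - x.val) * 2 ^ N ≤ n * S N H := by
    have h1 : (M + 1 - x.val) * 2 ^ N ≤ C * 2 ^ N := Nat.mul_le_mul_right _ hcard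
    have h3 : (M + 1 - x.val) = (M - x.val) + 1 := by omega
    rw [h3, add_mul, one_mul] at h1
    have h4 : 2 ^ N * Stmt4Proof.w H 0 (Stmt4Proof.lvm n (Stmt4Proof.eFin n H N k r)) ≤
        2 ^ N * 1 := Nat.mul_le_mul_left _ hw0
    rw [mul_one] at h4
    have h2 := hinv
    generalize hX : (M - x.val) * 2 ^ N = X at *
    generalize hY : C * 2 ^ N = Y at *
    generalize hZ : (2:ℕ) ^ N = Z at *
    generalize hW : 2 ^ N * Stmt4Proof.w H 0 (Stmt4Proof.lvm n (Stmt4Proof.eFin n H N k r))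
        = W at *
    omega
  -- to the real bound
  have keyR : ((M - x.val : ℕ) : ℝ) ≤ (n * S N H : ℝ) / 2 ^ N := by
    rw [le_div_iff₀ (by positivity : (0:ℝ) < 2 ^ N)]
    calc ((M - x.val : ℕ) : ℝ) * 2 ^ N = (((M - x.val) * 2 ^ N : ℕ) : ℝ) := by
          push_cast; ring
      _ ≤ ((n * S N H : ℕ) : ℝ) := Nat.cast_le.2 key
      _ = (n * S N H : ℝ) := by push_cast; ring
  have hceil : (M - x.val) ≤ ⌈(n * S N H : ℝ) / 2 ^ N⌉₊ := by
    have h5 := Nat.le_ceil ((n * S N H : ℝ) / 2 ^ N)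
    have h6 : ((M - x.val : ℕ) : ℝ) ≤ ((⌈(n * S N H : ℝ) / 2 ^ N⌉₊ : ℕ) : ℝ) :=
      le_trans keyR h5
    exact_mod_cast h6
  -- evaluate out
  have hout : Stmt4Proof.outF n H N k hn0 r = ⟨M, hMn⟩ := by
    unfold Stmt4Proof.outF
    rw [dif_pos hne]
  rw [hout]
  have hsub : (((⟨M, hMn⟩ : Fin n) - x : Fin n) : ℕ) = M - x.val := by
    rw [Fin.sub_def]
    simp only
    have e1 : n - x.val + M = (M - x.val) + n := by omega
    rw [e1, Nat.add_mod_right, Nat.mod_eq_of_lt (by omega)]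
  rw [hsub]
  exact hceil
end

section
/- Let 0 < m ≤ M be reals and k, H natural numbers with 2H ≤ k, and set L := ⌈2^k/S(k,H)⌉. For every online time-series algorithm with k queries (arbitrary adaptive binary queries about the price sequence, together with an online decision rule), there exist a price sequence p and a response vector r that is H-valid for p such that max_i p i ≥ (M/m)^{1/(L+1)} · (the accepted price of the algorithm on (p,r)). -/
/-- A price sequence: `d ≥ 1` prices, each in `[m, M]`. -/
structure PriceSeq (m M : ℝ) where
  d : ℕ
  one_le_d : 1 ≤ d
  p : Fin d → ℝ
  lower : ∀ i, m ≤ p i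
  upper : ∀ i, p i ≤ M

/-- The maximum price of a price sequence. -/
noncomputable def maxPrice {m M : ℝ} (σ : PriceSeq m M) : ℝ :=
  Finset.univ.sup' (Finset.univ_nonempty_iff.mpr ⟨⟨0, σ.one_le_d⟩⟩) σ.p

/-- The accepted price, given a decision rule `dec` on prefixes of prices: the price `p i`
for the least index `i` such that `dec [p 0, …, p i] = true`, and `p (d-1)` if no such
index exists. -/
noncomputable def accPrice {m M : ℝ} (σ : PriceSeq m M) (dec : List ℝ → Bool) : ℝ :=
  if h : ∃ i : ℕ, i < σ.d ∧ dec (((List.finRange σ.d).take (i + 1)).map σ.p) = true then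
    σ.p ⟨Nat.find h, (Nat.find_spec h).1⟩
  else σ.p ⟨σ.d - 1, by have := σ.one_le_d; omega⟩

namespace Aux

variable {D : Type*} {k : ℕ}

def buildR (Q : (i : Fin k) → (Fin i.1 → Bool) → D → Bool) (x : D) (E : Finset (Fin k)) :
    (n : ℕ) → n ≤ k → (Fin n → Bool)
  | 0, _ => fun i => i.elim0
  | n+1, h => Fin.snoc (buildR Q x E n (Nat.le_of_succ_le h))
      (xor (decide ((⟨n, h⟩ : Fin k) ∈ E)) (Q ⟨n, h⟩ (buildR Q x E n (Nat.le_of_succ_le h)) x))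

lemma buildR_coh (Q : (i : Fin k) → (Fin i.1 → Bool) → D → Bool) (x : D) (E : Finset (Fin k)) :
    ∀ (n' n : ℕ) (h' : n' ≤ k) (h : n ≤ k) (hnn : n ≤ n') (j : Fin n),
    buildR Q x E n' h' (Fin.castLE hnn j) = buildR Q x E n h j := by
  intro n'
  induction n' with
  | zero =>
    intro n h' h hnn j
    exact absurd j.isLt (by omega)
  | succ n' ih =>
    intro n h' h hnn j
    rcases eq_or_lt_of_le hnn with rfl | hlt
    · have : Fin.castLE hnn j = j := Fin.ext rfl
      rw [this]
    · have hn : n ≤ n' := by omega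
      have : Fin.castLE hnn j = Fin.castSucc (Fin.castLE hn j) := Fin.ext rfl
      rw [this]
      show Fin.snoc _ _ _ = _
      rw [Fin.snoc_castSucc]
      exact ih n (Nat.le_of_succ_le h') h hn j

lemma buildR_apply (Q : (i : Fin k) → (Fin i.1 → Bool) → D → Bool) (x : D) (E : Finset (Fin k))
    (i : Fin k) :
    buildR Q x E k le_rfl i = xor (decide (i ∈ E))
      (Q i (fun j => buildR Q x E k le_rfl (Fin.castLE i.isLt.le j)) x) := by
  have key : ∀ (n : ℕ) (h : n ≤ k) (i' : Fin n),
      buildR Q x E n h i' = xor (decide ((Fin.castLE h i') ∈ E))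
        (Q (Fin.castLE h i') (buildR Q x E i'.1 (le_trans i'.isLt.le h)) x) := by
    intro n
    induction n with
    | zero => intro h i'; exact i'.elim0
    | succ n ih =>
      intro h i'
      induction i' using Fin.lastCases with
      | last =>
        show Fin.snoc _ _ _ = _
        rw [Fin.snoc_last]
        rfl
      | cast i' =>
        show Fin.snoc _ _ _ = _
        rw [Fin.snoc_castSucc, ih (Nat.le_of_succ_le h) i']
        rfl
  rw [key k le_rfl i]
  show xor (decide (i ∈ E)) (Q i (buildR Q x E i.1 i.isLt.le) x) = _
  congr 1
  congr 1
  funext j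
  exact (buildR_coh Q x E k i.1 le_rfl i.isLt.le i.isLt.le j).symm

lemma errCount_buildR (Q : (i : Fin k) → (Fin i.1 → Bool) → D → Bool) (x : D)
    (E : Finset (Fin k)) : errCount Q x (buildR Q x E k le_rfl) = E.card := by
  unfold errCount
  congr 1
  ext i
  simp only [Finset.mem_filter, Finset.mem_univ, true_and]
  rw [buildR_apply Q x E i]
  by_cases hi : i ∈ E <;> simp [hi]

lemma buildR_inj (Q : (i : Fin k) → (Fin i.1 → Bool) → D → Bool) (x : D)
    (E E' : Finset (Fin k)) (h : buildR Q x E k le_rfl = buildR Q x E' k le_rfl) : E = E' := by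
  ext i
  have h1 := buildR_apply Q x E i
  have h2 := buildR_apply Q x E' i
  rw [h] at h1
  rw [h1] at h2
  by_cases hi : i ∈ E <;> by_cases hi' : i ∈ E' <;> simp [hi, hi'] at h2 ⊢

lemma card_small_subsets (H : ℕ) :
    (Finset.univ.filter fun E : Finset (Fin k) => E.card ≤ H).card = S k H := by
  have heq : (Finset.univ.filter fun E : Finset (Fin k) => E.card ≤ H)
      = (Finset.range (H+1)).biUnion (fun j => Finset.powersetCard j Finset.univ) := by
    ext E
    simp [Finset.mem_powersetCard_univ, Nat.lt_succ_iff]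
  rw [heq, Finset.card_biUnion]
  · simp [S, Finset.card_powersetCard]
  · intro a _ b _ hab
    simp only [Finset.disjoint_left]
    intro E hE hE'
    rw [Finset.mem_powersetCard_univ] at hE hE'
    omega

lemma S_le_valid (Q : (i : Fin k) → (Fin i.1 → Bool) → D → Bool) (x : D) (H : ℕ) :
    S k H ≤ (Finset.univ.filter fun r : Fin k → Bool => errCount Q x r ≤ H).card := by
  rw [← card_small_subsets (k := k) H]
  apply Finset.card_le_card_of_injOn (fun E => buildR Q x E k le_rfl)
  · intro E hE
    simp only [Finset.coe_filter, Finset.mem_coe, Finset.mem_filter, Finset.mem_univ, true_and, Set.mem_setOf_eq] at hE ⊢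
    rw [errCount_buildR]; exact hE
  · intro E _ E' _ h
    exact buildR_inj Q x E E' h

lemma exists_common {α : Type*} [DecidableEq α] [Fintype α] (n : ℕ) (V : ℕ → Finset α)
    (h : Fintype.card α < ∑ t ∈ Finset.Icc 1 n, (V t).card) :
    ∃ t t', t ∈ Finset.Icc 1 n ∧ t' ∈ Finset.Icc 1 n ∧ t < t' ∧ ∃ r, r ∈ V t ∧ r ∈ V t' := by
  by_contra hc
  push_neg at hc
  have hdisj : ∀ x ∈ Finset.Icc 1 n, ∀ y ∈ Finset.Icc 1 n, x ≠ y → Disjoint (V x) (V y) := by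
    intro x hx y hy hxy
    rw [Finset.disjoint_left]
    intro r hrx hry
    rcases Nat.lt_or_ge x y with h1 | h1
    · exact hc x y hx hy h1 r hrx hry
    · exact hc y x hy hx (by omega) r hry hrx
  have hle := Finset.card_le_card (Finset.subset_univ ((Finset.Icc 1 n).biUnion V))
  rw [Finset.card_biUnion hdisj, Finset.card_univ] at hle
  omega

lemma rho_one_le (m M : ℝ) (hm : 0 < m) (hmM : m ≤ M) (e : ℝ) (he : 0 ≤ e) :
    1 ≤ (M / m) ^ e :=
  Real.one_le_rpow ((le_div_iff₀ hm).mpr (by linarith)) he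

lemma rho_pow (m M : ℝ) (hm : 0 < m) (hmM : m ≤ M) (L : ℕ) :
    ((M / m) ^ ((1 : ℝ) / ((L : ℝ) + 1))) ^ (L + 1) = M / m := by
  rw [← Real.rpow_natCast ((M / m) ^ ((1 : ℝ) / ((L : ℝ) + 1))) (L + 1),
    ← Real.rpow_mul (div_nonneg (by linarith) hm.le)]
  push_cast
  rw [one_div_mul_cancel (by positivity), Real.rpow_one]

noncomputable def mkSeq (m M : ℝ) (hm : 0 < m) (hmM : m ≤ M) (L t : ℕ) : PriceSeq m M where
  d := L + 1
  one_le_d := by omega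
  p := fun i => if (i : ℕ) < t then m * ((M / m) ^ ((1 : ℝ) / ((L : ℝ) + 1))) ^ ((i : ℕ) + 1) else m
  lower := by
    intro i
    split
    · nlinarith [one_le_pow₀ (rho_one_le m M hm hmM ((1:ℝ)/((L:ℝ)+1)) (by positivity)) (n := (i:ℕ)+1)]
    · exact le_rfl
  upper := by
    intro i
    split
    · have h1 : ((M / m) ^ ((1 : ℝ) / ((L : ℝ) + 1))) ^ ((i : ℕ) + 1)
          ≤ ((M / m) ^ ((1 : ℝ) / ((L : ℝ) + 1))) ^ (L + 1) :=
        pow_le_pow_right₀ (rho_one_le m M hm hmM _ (by positivity)) (by omega)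
      rw [rho_pow m M hm hmM] at h1
      calc m * ((M / m) ^ ((1 : ℝ) / ((L : ℝ) + 1))) ^ ((i : ℕ) + 1) ≤ m * (M / m) := by nlinarith
        _ = M := by field_simp
    · linarith

lemma mkSeq_d (m M : ℝ) (hm : 0 < m) (hmM : m ≤ M) (L t : ℕ) :
    (mkSeq m M hm hmM L t).d = L + 1 := rfl

lemma mkSeq_p (m M : ℝ) (hm : 0 < m) (hmM : m ≤ M) (L t : ℕ) (j : ℕ)
    (hj : j < (mkSeq m M hm hmM L t).d) :
    (mkSeq m M hm hmM L t).p ⟨j, hj⟩ =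
      if j < t then m * ((M / m) ^ ((1 : ℝ) / ((L : ℝ) + 1))) ^ (j + 1) else m := rfl

lemma le_maxPrice {m M : ℝ} (σ : PriceSeq m M) (i : Fin σ.d) : σ.p i ≤ maxPrice σ :=
  Finset.le_sup' σ.p (Finset.mem_univ i)

lemma prefix_mkSeq (m M : ℝ) (hm : 0 < m) (hmM : m ≤ M) (L t t' n : ℕ)
    (hn : n ≤ t) (hn' : n ≤ t') :
    ((List.finRange (mkSeq m M hm hmM L t).d).take n).map (mkSeq m M hm hmM L t).p
      = ((List.finRange (mkSeq m M hm hmM L t').d).take n).map (mkSeq m M hm hmM L t').p := by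
  show ((List.finRange (L+1)).take n).map
      (fun j : Fin (L+1) => if (j : ℕ) < t then
        m * ((M / m) ^ ((1 : ℝ) / ((L : ℝ) + 1))) ^ ((j : ℕ) + 1) else m)
      = ((List.finRange (L+1)).take n).map
      (fun j : Fin (L+1) => if (j : ℕ) < t' then
        m * ((M / m) ^ ((1 : ℝ) / ((L : ℝ) + 1))) ^ ((j : ℕ) + 1) else m)
  apply List.map_congr_left
  intro j hj
  have hjn : (j : ℕ) < n := by
    rw [List.mem_take_iff_getElem] at hj
    obtain ⟨i, hi, hig⟩ := hj
    have : (j : ℕ) = i := by rw [← hig]; simp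
    omega
  rw [if_pos (by omega), if_pos (by omega)]

end Aux

theorem stmt7 (m M : ℝ) (hm : 0 < m) (hmM : m ≤ M) (k H : ℕ) (hH : 2 * H ≤ k)
    (Q : (i : Fin k) → (Fin i.1 → Bool) → PriceSeq m M → Bool)
    (a : (Fin k → Bool) → List ℝ → Bool) :
    ∃ (σ : PriceSeq m M) (r : Fin k → Bool),
      HValid H Q σ r ∧
      (M / m) ^ ((1 : ℝ) / ((⌈(2 ^ k : ℝ) / (S k H : ℝ)⌉₊ : ℕ) + 1)) *
          accPrice σ (a r) ≤ maxPrice σ := by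
  classical
  set L := ⌈(2 ^ k : ℝ) / (S k H : ℝ)⌉₊ with hLdef
  set ρ := (M / m) ^ ((1 : ℝ) / ((L : ℝ) + 1)) with hρdef
  have hρ1 : 1 ≤ ρ := Aux.rho_one_le m M hm hmM _ (by positivity)
  have hρ0 : 0 ≤ ρ := by linarith
  have hS1 : 1 ≤ S k H := by
    have h0 : Nat.choose k 0 ≤ S k H :=
      Finset.single_le_sum (f := fun j => Nat.choose k j) (fun _ _ => Nat.zero_le _)
        (Finset.mem_range.mpr (by omega))
    simpa using h0
  have hSle : S k H ≤ 2 ^ k := by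
    have h1 : S k H ≤ ∑ j ∈ Finset.range (k + 1), Nat.choose k j := by
      apply Finset.sum_le_sum_of_subset
      intro j hj
      simp only [Finset.mem_range] at hj ⊢
      omega
    rwa [Nat.sum_range_choose] at h1
  have hL1 : 1 ≤ L := by
    rw [hLdef]
    have : (0 : ℝ) < (2 ^ k : ℝ) / (S k H : ℝ) := by positivity
    exact Nat.ceil_pos.mpr this
  have hLS : 2 ^ k ≤ L * S k H := by
    have h1 : ((2 : ℝ) ^ k) / (S k H : ℝ) ≤ (L : ℝ) := by rw [hLdef]; exact Nat.le_ceil _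
    have hSpos : (0 : ℝ) < (S k H : ℝ) := by exact_mod_cast hS1
    rw [div_le_iff₀ hSpos] at h1
    exact_mod_cast h1
  set V : ℕ → Finset (Fin k → Bool) := fun t =>
    Finset.univ.filter (fun r => errCount Q (Aux.mkSeq m M hm hmM L t) r ≤ H) with hVdef
  have hsum : Fintype.card (Fin k → Bool) < ∑ t ∈ Finset.Icc 1 (L + 1), (V t).card := by
    have hcard : Fintype.card (Fin k → Bool) = 2 ^ k := by simp
    have h3 : (L + 1) * S k H ≤ ∑ t ∈ Finset.Icc 1 (L + 1), (V t).card := by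
      calc (L + 1) * S k H = ∑ _t ∈ Finset.Icc 1 (L + 1), S k H := by
            rw [Finset.sum_const, Nat.card_Icc, smul_eq_mul]
            norm_num
        _ ≤ _ := Finset.sum_le_sum (fun t _ => Aux.S_le_valid Q _ H)
    have h4 : 2 ^ k < (L + 1) * S k H := by
      have : (L + 1) * S k H = L * S k H + S k H := by ring
      omega
    omega
  obtain ⟨t, t', ht, ht', htt, r, hrt, hrt'⟩ := Aux.exists_common (L + 1) V hsum
  rw [Finset.mem_Icc] at ht ht'
  rw [hVdef] at hrt hrt'
  simp only [Finset.mem_filter, Finset.mem_univ, true_and] at hrt hrt'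
  by_cases hP : ∃ i, i < t ∧
      a r (((List.finRange (Aux.mkSeq m M hm hmM L t').d).take (i + 1)).map
        (Aux.mkSeq m M hm hmM L t').p) = true
  · -- accept early: use σ t'
    refine ⟨Aux.mkSeq m M hm hmM L t', r, hrt', ?_⟩
    obtain ⟨i0, hi0t, hi0d⟩ := hP
    have hex : ∃ i : ℕ, i < (Aux.mkSeq m M hm hmM L t').d ∧
        a r (((List.finRange (Aux.mkSeq m M hm hmM L t').d).take (i + 1)).map
          (Aux.mkSeq m M hm hmM L t').p) = true :=
      ⟨i0, by rw [Aux.mkSeq_d]; omega, hi0d⟩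
    rw [accPrice, dif_pos hex]
    set N := Nat.find hex with hNdef
    have hNle : N ≤ i0 := Nat.find_min' hex ⟨by rw [Aux.mkSeq_d]; omega, hi0d⟩
    have hNt : N < t := by omega
    rw [Aux.mkSeq_p, if_pos (by omega : N < t')]
    have hmax : m * ρ ^ t' ≤ maxPrice (Aux.mkSeq m M hm hmM L t') := by
      have h5 := Aux.le_maxPrice (Aux.mkSeq m M hm hmM L t')
        ⟨t' - 1, by rw [Aux.mkSeq_d]; omega⟩
      rw [Aux.mkSeq_p, if_pos (by omega : t' - 1 < t')] at h5
      have he : t' - 1 + 1 = t' := by omega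
      rw [he] at h5
      exact h5
    calc ρ * (m * ρ ^ (N + 1)) = m * ρ ^ (N + 2) := by ring
      _ ≤ m * ρ ^ t' := by
          apply mul_le_mul_of_nonneg_left (pow_le_pow_right₀ hρ1 (by omega)) hm.le
      _ ≤ _ := hmax
  · -- never accepts early: use σ t
    refine ⟨Aux.mkSeq m M hm hmM L t, r, hrt, ?_⟩
    have hacc : accPrice (Aux.mkSeq m M hm hmM L t) (a r) = m := by
      rw [accPrice]
      split_ifs with hex
      · have hNt : ¬ (Nat.find hex < t) := by
          intro hlt
          apply hP
          refine ⟨Nat.find hex, hlt, ?_⟩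
          have hsp := (Nat.find_spec hex).2
          rwa [Aux.prefix_mkSeq m M hm hmM L t t' (Nat.find hex + 1) (by omega) (by omega)]
            at hsp
        rw [Aux.mkSeq_p, if_neg hNt]
      · rw [Aux.mkSeq_p, if_neg (by rw [Aux.mkSeq_d]; omega)]
    rw [hacc]
    have hmax : m * ρ ^ t ≤ maxPrice (Aux.mkSeq m M hm hmM L t) := by
      have h5 := Aux.le_maxPrice (Aux.mkSeq m M hm hmM L t)
        ⟨t - 1, by rw [Aux.mkSeq_d]; omega⟩
      rw [Aux.mkSeq_p, if_pos (by omega : t - 1 < t)] at h5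
      have he : t - 1 + 1 = t := by omega
      rw [he] at h5
      exact h5
    calc ρ * m = m * ρ ^ 1 := by ring
      _ ≤ m * ρ ^ t := by
          apply mul_le_mul_of_nonneg_left (pow_le_pow_right₀ hρ1 (by omega)) hm.le
      _ ≤ _ := hmax
end

section
/- Let k, H be natural numbers with 2H ≤ k and set L := 2^k/S(k,H) (a positive real). Consider any adaptive k-query strategy over the set D = {u ∈ ℝ | u ≥ 1} (arbitrary binary queries about the hidden target u) with an output map out assigning to each response vector a bidding sequence. Then for every real c with c < (1/L)(1+L)^{1+1/L}, there exist u ≥ 1 and a response vector r that is H-valid for u such that either out r does not discover u, or c(out r, u) > c·u. -/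
/-- A bidding sequence: a strictly increasing sequence of positive reals. -/
structure BidSeq where
  X : ℕ → ℝ
  pos : ∀ i, 0 < X i
  mono : StrictMono X

/-- A bidding sequence discovers the target `u` if some bid is at least `u`. -/
def Discovers (B : BidSeq) (u : ℝ) : Prop := ∃ i, u ≤ B.X i

open Classical in
/-- The cost of discovering target `u` with bidding sequence `B`: the sum of all bids up to
and including the first bid that is at least `u` (and `0` if `u` is never discovered). -/
noncomputable def bidCost (B : BidSeq) (u : ℝ) : ℝ :=
  if h : ∃ i, u ≤ B.X i then ∑ i ∈ Finset.range (Nat.find h + 1), B.X i else 0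



open Real in
lemma keyF (L F : ℝ) (hL : 0 < L) (hF : 1 < F) :
    (L+1) * Real.log (L+1) - L * Real.log L ≤ (L+1) * Real.log F - Real.log (F-1) := by
  have hF0 : (0:ℝ) < F := by linarith
  have hL1 : (0:ℝ) < L + 1 := by linarith
  set x : ℝ := L * F / (L + 1) with hxdef
  have hx : 0 < x := by positivity
  have hbern : L * (F - 1) ≤ x ^ (L + 1 : ℝ) := by
    have h := one_add_mul_self_le_rpow_one_add (s := x - 1) (by linarith) (p := L + 1) (by linarith)
    have hx1 : 1 + (x - 1) = x := by ring
    rw [hx1] at h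
    have : 1 + (L + 1) * (x - 1) = L * (F - 1) := by
      field_simp [hxdef]
      have hx2 : x * (L + 1) = L * F := by rw [hxdef]; exact div_mul_cancel₀ _ hL1.ne'
      linear_combination hx2
    linarith [h, this.symm.le]
  have hlog : Real.log (L * (F - 1)) ≤ (L + 1) * Real.log x := by
    have h1 : Real.log (L * (F - 1)) ≤ Real.log (x ^ (L + 1 : ℝ)) :=
      (Real.log_le_log_iff (by nlinarith) (Real.rpow_pos_of_pos hx _)).mpr hbern
    rwa [Real.log_rpow hx] at h1
  have hxlog : Real.log x = Real.log L + Real.log F - Real.log (L + 1) := by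
    rw [hxdef, Real.log_div (by positivity) hL1.ne', Real.log_mul hL.ne' hF0.ne']
  have hlF : Real.log (L * (F - 1)) = Real.log L + Real.log (F - 1) :=
    Real.log_mul hL.ne' (by linarith)
  rw [hlF, hxlog] at hlog
  nlinarith [hlog]

set_option maxHeartbeats 1600000 in
lemma analytic (L c ρ : ℝ) (hL : 0 < L) (hc1 : 1 ≤ c) (hρ : 1 < ρ)
    (hkey : L * Real.log (c * ρ ^ 2) ≤ (L + 1) * Real.log (L + 1) - L * Real.log L)
    (X : ℕ → ℝ) (hXpos : ∀ i, 0 < X i)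
    (n : ℕ)
    (hn : L * ((Real.log c / Real.log ρ + 1) * (Real.log c / Real.log ρ + 2))
        + (Real.log c / Real.log ρ + 1) * (Real.log c / Real.log ρ) < n)
    (T : Finset ℕ) (hTsub : T ⊆ Finset.range n) (hTcard : (n : ℝ) ≤ L * T.card)
    (j : ℕ → ℕ)
    (hj1 : ∀ t ∈ T, ρ ^ t ≤ X (j t))
    (hj2 : ∀ t ∈ T, ∀ i < j t, X i < ρ ^ t)
    (hj3 : ∀ t ∈ T, ∑ i ∈ Finset.range (j t + 1), X i ≤ c * ρ ^ t) : False := by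
  have hρ0 : (0:ℝ) < ρ := by linarith
  set lρ : ℝ := Real.log ρ with hlρdef
  have hlρ : 0 < lρ := Real.log_pos hρ
  set lc : ℝ := Real.log c with hlcdef
  have hlc : 0 ≤ lc := Real.log_nonneg hc1
  set w : ℝ := lc / lρ with hwdef
  have hw : 0 ≤ w := by positivity
  -- T nonempty
  have hne : T.Nonempty := by
    rcases T.eq_empty_or_nonempty with h | h
    · exfalso
      rw [h] at hTcard
      simp only [Finset.card_empty, Nat.cast_zero, mul_zero] at hTcard
      have h0 : (0:ℝ) ≤ L * ((w + 1) * (w + 2)) + (w + 1) * w := by positivity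
      nlinarith
    · exact h
  -- monotonicity of j on T
  have jmono : ∀ t ∈ T, ∀ t' ∈ T, t ≤ t' → j t ≤ j t' := by
    intro t ht t' ht' htt
    by_contra hlt
    push_neg at hlt
    have h1 := hj2 t ht (j t') (by omega)
    have h2 := hj1 t' ht'
    have h3 : ρ ^ t ≤ ρ ^ t' := pow_le_pow_right₀ (le_of_lt hρ) htt
    linarith
  classical
  set img : Finset ℕ := T.image j with himg
  set d : ℕ := img.card with hd
  have hd0 : 0 < d := Finset.card_pos.mpr (hne.image j)
  set iso := img.orderIsoOfFin rfl with hiso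
  set idx : Fin d → ℕ := fun a => (iso a : ℕ) with hidx
  have idx_mono : ∀ {a b : Fin d}, a < b → idx a < idx b := by
    intro a b hab
    have := iso.lt_iff_lt.mpr hab
    exact_mod_cast this
  have idx_mem : ∀ a, idx a ∈ img := fun a => (iso a).2
  set fib : Fin d → Finset ℕ := fun a => T.filter (fun t => j t = idx a) with hfib
  have fib_ne : ∀ a, (fib a).Nonempty := by
    intro a
    obtain ⟨t, ht, hjt⟩ := Finset.mem_image.mp (idx_mem a)
    exact ⟨t, Finset.mem_filter.mpr ⟨ht, hjt⟩⟩
  set Mx : Fin d → ℕ := fun a => (fib a).max' (fib_ne a) with hMxdef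
  set mn : Fin d → ℕ := fun a => (fib a).min' (fib_ne a) with hmndef
  have hMx_mem : ∀ a, Mx a ∈ fib a := fun a => (fib a).max'_mem _
  have hmn_mem : ∀ a, mn a ∈ fib a := fun a => (fib a).min'_mem _
  have hmnMx : ∀ a, mn a ≤ Mx a := fun a => (fib a).min'_le _ (hMx_mem a)
  have hMxT : ∀ a, Mx a ∈ T := fun a => (Finset.mem_filter.mp (hMx_mem a)).1
  have hmnT : ∀ a, mn a ∈ T := fun a => (Finset.mem_filter.mp (hmn_mem a)).1
  have hjMx : ∀ a, j (Mx a) = idx a := fun a => (Finset.mem_filter.mp (hMx_mem a)).2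
  have hjmn : ∀ a, j (mn a) = idx a := fun a => (Finset.mem_filter.mp (hmn_mem a)).2
  have ord : ∀ {a b : Fin d}, a < b → Mx a < mn b := by
    intro a b hab
    by_contra hle
    push_neg at hle
    have h := jmono (mn b) (hmnT b) (Mx a) (hMxT a) hle
    rw [hjmn, hjMx] at h
    exact absurd h (not_le.mpr (idx_mono hab))
  set P : Fin d → ℝ := fun a => ∑ i ∈ Finset.range (idx a + 1), X i with hPdef
  have hPpos : ∀ a, 0 < P a := fun a =>
    Finset.sum_pos (fun i _ => hXpos i) Finset.nonempty_range_add_one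
  have hPub : ∀ a, P a ≤ c * ρ ^ (mn a) := by
    intro a
    have h := hj3 (mn a) (hmnT a)
    rwa [hjmn] at h
  have hXlb : ∀ a, ρ ^ (Mx a) ≤ X (idx a) := by
    intro a
    have h := hj1 (Mx a) (hMxT a)
    rwa [hjMx] at h
  have hPlb : ∀ a, ρ ^ (Mx a) ≤ P a := by
    intro a
    refine (hXlb a).trans ?_
    exact Finset.single_le_sum (fun i _ => (hXpos i).le) (Finset.self_mem_range_succ _)
  set F : Fin d → ℝ := fun a => P a / ρ ^ (Mx a) with hFdef
  have hF1 : ∀ a, 1 ≤ F a := fun a => (one_le_div (pow_pos hρ0 _)).mpr (hPlb a)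
  set G : Fin d → ℝ := fun a => Real.log (F a) with hGdef
  have hG0 : ∀ a, 0 ≤ G a := fun a => Real.log_nonneg (hF1 a)
  have hGlog : ∀ a, G a = Real.log (P a) - (Mx a : ℝ) * lρ := by
    intro a
    rw [hGdef]
    simp only [hFdef]
    rw [Real.log_div (hPpos a).ne' (pow_pos hρ0 _).ne', Real.log_pow, hlρdef]
  have hcov : ∀ a, ((Mx a : ℝ) - mn a) * lρ ≤ lc - G a := by
    intro a
    have h1 : Real.log (P a) ≤ Real.log (c * ρ ^ (mn a)) :=
      (Real.log_le_log_iff (hPpos a) (by positivity)).mpr (hPub a)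
    rw [Real.log_mul (by positivity) (by positivity), Real.log_pow] at h1
    have h2 := hGlog a
    rw [hlcdef, hlρdef]
    rw [hlρdef] at h2
    nlinarith [h1, h2]
  have hcovw : ∀ a, ((Mx a : ℝ) - mn a) ≤ w := by
    intro a
    rw [hwdef, le_div_iff₀ hlρ]
    nlinarith [hcov a, hG0 a]
  have hfc : ∀ a, ((fib a).card : ℝ) ≤ ((Mx a : ℝ) - mn a) + 1 := by
    intro a
    have hsub : fib a ⊆ Finset.Icc (mn a) (Mx a) := by
      intro t ht
      exact Finset.mem_Icc.mpr ⟨(fib a).min'_le _ ht, (fib a).le_max' _ ht⟩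
    have hcard := Finset.card_le_card hsub
    rw [Nat.card_Icc] at hcard
    have : ((fib a).card : ℝ) ≤ ((Mx a + 1 - mn a : ℕ) : ℝ) := by exact_mod_cast hcard
    rw [Nat.cast_sub (by have := hmnMx a; omega)] at this
    push_cast at this
    linarith
  have step : ∀ a b : Fin d, a < b → P a + ρ ^ (Mx b) ≤ P b := by
    intro a b hab
    have hiab : idx a < idx b := idx_mono hab
    have hsplit := Finset.sum_range_add_sum_Ico X (show idx a + 1 ≤ idx b + 1 by omega)
    have hmem : idx b ∈ Finset.Ico (idx a + 1) (idx b + 1) := Finset.mem_Ico.mpr ⟨by omega, by omega⟩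
    have hX : X (idx b) ≤ ∑ i ∈ Finset.Ico (idx a + 1) (idx b + 1), X i :=
      Finset.single_le_sum (fun i _ => (hXpos i).le) hmem
    have := hXlb b
    simp only [hPdef]
    rw [← hsplit]
    linarith
  have hFb1 : ∀ a b : Fin d, a < b → F a / ρ ^ (Mx b - Mx a) + 1 ≤ F b := by
    intro a b hab
    have hMM : Mx a < Mx b := lt_of_lt_of_le (ord hab) (hmnMx b)
    have hpow : ρ ^ (Mx b) = ρ ^ (Mx a) * ρ ^ (Mx b - Mx a) := by
      rw [← pow_add]
      congr 1
      omega
    have h := step a b hab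
    have hpb : (0:ℝ) < ρ ^ (Mx b) := pow_pos hρ0 _
    have h2 : (P a + ρ ^ (Mx b)) / ρ ^ (Mx b) ≤ P b / ρ ^ (Mx b) :=
      div_le_div_of_nonneg_right h hpb.le
    have e1 : (P a + ρ ^ (Mx b)) / ρ ^ (Mx b) = P a / ρ ^ (Mx b) + 1 := by
      field_simp
    have e2 : P a / ρ ^ (Mx b) = F a / ρ ^ (Mx b - Mx a) := by
      simp only [hFdef]
      rw [div_div, ← hpow]
    rw [e1, e2] at h2
    exact h2
  set Hf : Fin d → ℝ := fun a => (1 / L) * ((Mx a : ℝ) + G a / lρ) with hHfdef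
  have hlcρ : Real.log (c * ρ ^ 2) = lc + 2 * lρ := by
    rw [Real.log_mul (by positivity) (by positivity), Real.log_pow, hlcdef, hlρdef]
    push_cast
    ring
  have perstep : ∀ a b : Fin d, a < b → ((fib b).card : ℝ) + 1 ≤ Hf b - Hf a := by
    intro a b hab
    have hMM : Mx a < Mx b := lt_of_lt_of_le (ord hab) (hmnMx b)
    have hFapos : 0 < F a := lt_of_lt_of_le one_pos (hF1 a)
    have hfrac : 0 < F a / ρ ^ (Mx b - Mx a) := by positivity
    have hFb : 1 < F b := lt_of_lt_of_le (by linarith) (hFb1 a b hab)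
    have hkeyb := keyF L (F b) hL hFb
    have hE : G a - ((Mx b : ℝ) - (Mx a : ℝ)) * lρ ≤ Real.log (F b - 1) := by
      have h1 : F a / ρ ^ (Mx b - Mx a) ≤ F b - 1 := by linarith [hFb1 a b hab]
      have h2 : Real.log (F a / ρ ^ (Mx b - Mx a)) ≤ Real.log (F b - 1) :=
        (Real.log_le_log_iff hfrac (by linarith)).mpr h1
      rw [Real.log_div hFapos.ne' (pow_pos hρ0 _).ne', Real.log_pow] at h2
      rw [Nat.cast_sub hMM.le] at h2
      rw [hGdef, hlρdef]
      linarith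
    have ineq1 : (((Mx b : ℝ) - mn b) + 2) * (L * lρ) ≤
        (((Mx b : ℝ) - Mx a) * lρ + (G b - G a)) := by
      have h1 : L * ((((Mx b : ℝ) - mn b)) * lρ) ≤ L * (lc - G b) :=
        mul_le_mul_of_nonneg_left (hcov b) hL.le
      have h2 : L * (lc + 2 * lρ) ≤ (L + 1) * G b - Real.log (F b - 1) := by
        rw [← hlcρ]
        calc L * Real.log (c * ρ ^ 2) ≤ (L + 1) * Real.log (L + 1) - L * Real.log L := hkey
        _ ≤ (L + 1) * Real.log (F b) - Real.log (F b - 1) := hkeyb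
        _ = (L + 1) * G b - Real.log (F b - 1) := by rw [hGdef]
      nlinarith [hE]
    have hLlρ : 0 < L * lρ := by positivity
    have h2 : ((Mx b : ℝ) - mn b) + 2 ≤
        ((((Mx b : ℝ) - Mx a) * lρ + (G b - G a))) / (L * lρ) :=
      (le_div_iff₀ hLlρ).mpr ineq1
    have h3 : ((((Mx b : ℝ) - Mx a) * lρ + (G b - G a))) / (L * lρ) = Hf b - Hf a := by
      rw [hHfdef]
      field_simp
      ring
    rw [h3] at h2
    linarith [hfc b]
  set A : ℕ → Fin d := fun q => ⟨min q (d - 1), by omega⟩ with hAdef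
  have hAval : ∀ q, q < d → (A q : ℕ) = q := by
    intro q hq
    simp only [hAdef]
    omega
  have claim : ∀ b : ℕ, b < d →
      (∑ q ∈ Finset.range (b + 1), ((fib (A q)).card : ℝ)) + b ≤
        (((Mx (A 0) : ℝ) - mn (A 0)) + 1) + (Hf (A b) - Hf (A 0)) := by
    intro b
    induction b with
    | zero =>
      intro _
      simp only [zero_add, Finset.sum_range_one, Nat.cast_zero, add_zero]
      have := hfc (A 0)
      linarith
    | succ b ih =>
      intro hb1
      have hb : b < d := by omega
      have hord : A b < A (b + 1) := by
        rw [Fin.lt_def, hAval b hb, hAval (b+1) hb1]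
        omega
      have hps := perstep (A b) (A (b + 1)) hord
      have ihb := ih hb
      rw [Finset.sum_range_succ]
      have hcst : ((b + 1 : ℕ) : ℝ) = (b : ℕ) + 1 := by push_cast; ring
      rw [hcst]
      linarith
  -- total fiber count
  have hfibsum : ∑ q ∈ Finset.range d, (fib (A q)).card = T.card := by
    have h1 : T.card = ∑ v ∈ img, (T.filter fun t => j t = v).card :=
      Finset.card_eq_sum_card_fiberwise (fun t ht => Finset.mem_image_of_mem j ht)
    have h2 : ∑ v ∈ img, (T.filter fun t => j t = v).card
        = ∑ v ∈ img.attach, (T.filter fun t => j t = (v : ℕ)).card :=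
      (Finset.sum_attach img _).symm
    have h3 : ∑ v ∈ img.attach, (T.filter fun t => j t = (v : ℕ)).card
        = ∑ a : Fin d, (T.filter fun t => j t = ((iso a) : ℕ)).card := by
      calc ∑ v ∈ img.attach, (T.filter fun t => j t = (v : ℕ)).card
          = ∑ v : {x // x ∈ img}, (T.filter fun t => j t = (v : ℕ)).card := by
            rw [Finset.univ_eq_attach]
        _ = ∑ a : Fin d, (T.filter fun t => j t = ((iso.toEquiv a : {x // x ∈ img}) : ℕ)).card :=
            (Equiv.sum_comp iso.toEquiv _).symm
        _ = ∑ a : Fin d, (T.filter fun t => j t = ((iso a) : ℕ)).card := rfl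
    have h4 : ∑ a : Fin d, (T.filter fun t => j t = ((iso a) : ℕ)).card
        = ∑ q ∈ Finset.range d, (fib (A q)).card := by
      rw [← Fin.sum_univ_eq_sum_range (fun q => (fib (A q)).card) d]
      apply Finset.sum_congr rfl
      intro a _
      have : A (a : ℕ) = a := by
        apply Fin.ext
        rw [hAval _ a.isLt]
      rw [this]
    omega
  have hclaim := claim (d - 1) (by omega)
  have hrange : d - 1 + 1 = d := by omega
  rw [hrange] at hclaim
  have hsumR : (∑ q ∈ Finset.range d, ((fib (A q)).card : ℝ)) = (T.card : ℝ) := by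
    exact_mod_cast congrArg (Nat.cast : ℕ → ℝ) hfibsum
  have hlast : (Mx (A (d - 1)) : ℝ) ≤ (n : ℝ) - 1 := by
    have h := hTsub (hMxT (A (d - 1)))
    rw [Finset.mem_range] at h
    have h2 : Mx (A (d - 1)) + 1 ≤ n := h
    have h3 : ((Mx (A (d - 1)) + 1 : ℕ) : ℝ) ≤ (n : ℝ) := by exact_mod_cast h2
    push_cast at h3
    linarith
  have hGlast : G (A (d - 1)) ≤ lc := by
    have h1 := hcov (A (d - 1))
    have h2 : (0:ℝ) ≤ (Mx (A (d - 1)) : ℝ) - mn (A (d - 1)) := by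
      have := hmnMx (A (d - 1))
      have : ((mn (A (d-1)) : ℕ) : ℝ) ≤ ((Mx (A (d-1)) : ℕ) : ℝ) := by exact_mod_cast this
      linarith
    nlinarith
  have hHflast : Hf (A (d - 1)) ≤ (1 / L) * ((n : ℝ) - 1 + w) := by
    simp only [hHfdef]
    have hdivle : G (A (d - 1)) / lρ ≤ w := by
      rw [hwdef]
      exact div_le_div_of_nonneg_right hGlast hlρ.le
    have : (Mx (A (d-1)) : ℝ) + G (A (d-1)) / lρ ≤ (n : ℝ) - 1 + w := by linarith
    apply mul_le_mul_of_nonneg_left this (by positivity)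
  have hHf0 : 0 ≤ Hf (A 0) := by
    simp only [hHfdef]
    exact mul_nonneg (by positivity)
      (add_nonneg (Nat.cast_nonneg _) (div_nonneg (hG0 _) hlρ.le))
  have hdw : (T.card : ℝ) ≤ (d : ℝ) * (w + 1) := by
    rw [← hsumR]
    calc (∑ q ∈ Finset.range d, ((fib (A q)).card : ℝ))
        ≤ ∑ _q ∈ Finset.range d, (w + 1) :=
          Finset.sum_le_sum (fun q _ => le_trans (hfc (A q)) (by linarith [hcovw (A q)]))
      _ = (d : ℝ) * (w + 1) := by
          rw [Finset.sum_const, Finset.card_range, nsmul_eq_mul]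
  have hdcast : ((d - 1 : ℕ) : ℝ) = (d : ℝ) - 1 := by
    rw [Nat.cast_sub (by omega), Nat.cast_one]
  rw [hsumR, hdcast] at hclaim
  have hcov0 : ((Mx (A 0) : ℝ) - mn (A 0)) ≤ w := hcovw _
  have h1 : (T.card : ℝ) + ((d : ℝ) - 1) ≤ w + 1 + (1 / L) * ((n : ℝ) - 1 + w) := by
    linarith
  have e1 : L * ((1 / L) * ((n : ℝ) - 1 + w)) = (n : ℝ) - 1 + w := by
    field_simp
  have hm := mul_le_mul_of_nonneg_left h1 hL.le
  have hLD : L * (d : ℝ) ≤ L * (w + 1) + w + L - 1 := by nlinarith [hm, e1, hTcard]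
  have hfin : (n : ℝ) ≤ (L * (w + 1) + w + L - 1) * (w + 1) := by
    calc (n : ℝ) ≤ L * (T.card : ℝ) := hTcard
      _ ≤ L * ((d : ℝ) * (w + 1)) := mul_le_mul_of_nonneg_left hdw hL.le
      _ = (L * (d : ℝ)) * (w + 1) := by ring
      _ ≤ (L * (w + 1) + w + L - 1) * (w + 1) :=
          mul_le_mul_of_nonneg_right hLD (by positivity)
  nlinarith [hfin, hn, hw, hL]



def resp {k : ℕ} (Q : (i : Fin k) → (Fin i.1 → Bool) → ℝ → Bool) (u : ℝ)
    (T : Finset (Fin k)) (i : Fin k) : Bool :=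
  xor (decide (i ∈ T)) (Q i (fun j => resp Q u T ⟨j.1, j.2.trans i.2⟩) u)
termination_by i.1
decreasing_by exact j.2

lemma resp_eq {k : ℕ} (Q : (i : Fin k) → (Fin i.1 → Bool) → ℝ → Bool) (u : ℝ)
    (T : Finset (Fin k)) (i : Fin k) :
    resp Q u T i = xor (decide (i ∈ T)) (Q i (fun j => resp Q u T ⟨j.1, j.2.trans i.2⟩) u) := by
  rw [resp]

lemma resp_prefix {k : ℕ} (Q : (i : Fin k) → (Fin i.1 → Bool) → ℝ → Bool) (u : ℝ)
    (T : Finset (Fin k)) (i : Fin k) :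
    (fun j : Fin i.1 => resp Q u T (Fin.castLE i.isLt.le j))
      = (fun j : Fin i.1 => resp Q u T ⟨j.1, j.2.trans i.2⟩) := by
  funext j
  congr 1

lemma errCount_resp {k : ℕ} (Q : (i : Fin k) → (Fin i.1 → Bool) → ℝ → Bool) (u : ℝ)
    (T : Finset (Fin k)) : errCount Q u (resp Q u T) = T.card := by
  unfold errCount
  congr 1
  ext i
  simp only [Finset.mem_filter, Finset.mem_univ, true_and]
  rw [resp_prefix, resp_eq]
  cases hq : Q i (fun j : Fin i.1 => resp Q u T ⟨j.1, j.2.trans i.2⟩) u <;>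
    by_cases hm : i ∈ T <;> simp [hm]

lemma resp_inj {k : ℕ} (Q : (i : Fin k) → (Fin i.1 → Bool) → ℝ → Bool) (u : ℝ)
    (T T' : Finset (Fin k)) (h : resp Q u T = resp Q u T') : T = T' := by
  ext i
  have hpre : (fun j : Fin i.1 => resp Q u T ⟨j.1, j.2.trans i.2⟩)
      = (fun j : Fin i.1 => resp Q u T' ⟨j.1, j.2.trans i.2⟩) := by
    funext j
    rw [h]
  have hi := congrFun h i
  rw [resp_eq, resp_eq, hpre] at hi
  cases hq : Q i (fun j : Fin i.1 => resp Q u T' ⟨j.1, j.2.trans i.2⟩) u <;>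
    rw [hq] at hi <;> by_cases hm : i ∈ T <;> by_cases hm' : i ∈ T' <;>
    simp_all

lemma card_small_subsets (k H : ℕ) :
    ((Finset.univ : Finset (Finset (Fin k))).filter fun T => T.card ≤ H).card = S k H := by
  classical
  have heq : ((Finset.univ : Finset (Finset (Fin k))).filter fun T => T.card ≤ H)
      = (Finset.range (H + 1)).biUnion
          (fun j0 => Finset.powersetCard j0 (Finset.univ : Finset (Fin k))) := by
    ext T
    simp only [Finset.mem_filter, Finset.mem_univ, true_and, Finset.mem_biUnion,
      Finset.mem_range, Finset.mem_powersetCard]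
    constructor
    · intro h
      exact ⟨T.card, by omega, Finset.subset_univ T, rfl⟩
    · rintro ⟨j0, hj0, -, rfl⟩
      omega
  rw [heq, Finset.card_biUnion]
  · unfold S
    apply Finset.sum_congr rfl
    intro j0 _
    rw [Finset.card_powersetCard, Finset.card_univ, Fintype.card_fin]
  · intro x _ y _ hxy
    apply Finset.disjoint_left.mpr
    intro T hT hT'
    rw [Finset.mem_powersetCard] at hT hT'
    exact hxy (hT.2 ▸ hT'.2 ▸ rfl)

lemma valid_count {k H : ℕ} (Q : (i : Fin k) → (Fin i.1 → Bool) → ℝ → Bool) (u : ℝ) :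
    S k H ≤ ((Finset.univ : Finset (Fin k → Bool)).filter
      fun r => errCount Q u r ≤ H).card := by
  classical
  rw [← card_small_subsets k H]
  apply Finset.card_le_card_of_injOn (resp Q u)
  · intro T hT
    rw [Finset.mem_coe, Finset.mem_filter] at hT ⊢
    exact ⟨Finset.mem_univ _, by rw [errCount_resp]; exact hT.2⟩
  · intro T _ T' _ h
    exact resp_inj Q u T T' h

lemma pigeon {k H : ℕ} (Q : (i : Fin k) → (Fin i.1 → Bool) → ℝ → Bool)
    (n : ℕ) (u : ℕ → ℝ) :
    ∃ r : Fin k → Bool, n * S k H ≤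
      2 ^ k * ((Finset.range n).filter fun t => errCount Q (u t) r ≤ H).card := by
  classical
  have hswap : ∑ r : Fin k → Bool, ((Finset.range n).filter
        fun t => errCount Q (u t) r ≤ H).card
      = ∑ t ∈ Finset.range n, ((Finset.univ : Finset (Fin k → Bool)).filter
        fun r => errCount Q (u t) r ≤ H).card := by
    simp_rw [Finset.card_filter]
    rw [Finset.sum_comm]
  have hsum : n * S k H ≤ ∑ r : Fin k → Bool, ((Finset.range n).filter
      fun t => errCount Q (u t) r ≤ H).card := by
    rw [hswap]
    calc n * S k H = ∑ _t ∈ Finset.range n, S k H := by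
          rw [Finset.sum_const, Finset.card_range, smul_eq_mul]
      _ ≤ _ := Finset.sum_le_sum fun t _ => valid_count Q (u t)
  obtain ⟨r, -, hr⟩ := Finset.exists_max_image (Finset.univ : Finset (Fin k → Bool))
    (fun r => ((Finset.range n).filter fun t => errCount Q (u t) r ≤ H).card)
    Finset.univ_nonempty
  refine ⟨r, hsum.trans ?_⟩
  have hb := Finset.sum_le_card_nsmul Finset.univ
    (fun r => ((Finset.range n).filter fun t => errCount Q (u t) r ≤ H).card)
    (((Finset.range n).filter fun t => errCount Q (u t) r ≤ H).card)
    (fun x _ => hr x (Finset.mem_univ x))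
  rw [smul_eq_mul] at hb
  have hcard : (Finset.univ : Finset (Fin k → Bool)).card = 2 ^ k := by
    rw [Finset.card_univ]
    simp
  rw [hcard] at hb
  exact hb



lemma le_bidCost (B : BidSeq) (u : ℝ) (h : ∃ i, u ≤ B.X i) : u ≤ bidCost B u := by
  rw [bidCost, dif_pos h]
  exact (Nat.find_spec h).trans
    (Finset.single_le_sum (fun i _ => (B.pos i).le) (Finset.self_mem_range_succ _))

lemma bidCost_eq (B : BidSeq) (u : ℝ) (h : ∃ i, u ≤ B.X i) :
    bidCost B u = ∑ i ∈ Finset.range (Nat.find h + 1), B.X i := by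
  rw [bidCost, dif_pos h]


set_option maxHeartbeats 1000000 in
theorem stmt10 (k H : ℕ) (hH : 2 * H ≤ k)
    (Q : (i : Fin k) → (Fin i.1 → Bool) → ℝ → Bool)
    (out : (Fin k → Bool) → BidSeq)
    (c : ℝ)
    (hc : c < (1 / ((2 : ℝ) ^ k / S k H)) *
      (1 + (2 : ℝ) ^ k / S k H) ^ ((1 : ℝ) + 1 / ((2 : ℝ) ^ k / S k H))) :
    ∃ u : ℝ, 1 ≤ u ∧ ∃ r : Fin k → Bool, HValid H Q u r ∧
      (¬ Discovers (out r) u ∨ c * u < bidCost (out r) u) := by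
  classical
  by_contra hcon
  push_neg at hcon
  set L : ℝ := (2 : ℝ) ^ k / S k H with hLdef
  have hS0 : 0 < S k H := by
    have h1 : k.choose 0 ≤ S k H :=
      Finset.single_le_sum (f := fun j => k.choose j) (fun i _ => Nat.zero_le _)
        (Finset.mem_range.mpr (Nat.succ_pos H))
    exact Nat.lt_of_lt_of_le (by simp) h1
  have hSR : (0:ℝ) < (S k H : ℝ) := by exact_mod_cast hS0
  have hL0 : 0 < L := div_pos (by positivity) hSR
  have hvalid1 : HValid H Q 1 (resp Q 1 ∅) := by
    show errCount Q 1 (resp Q 1 ∅) ≤ H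
    rw [errCount_resp]
    simp
  have hc1 : 1 ≤ c := by
    obtain ⟨hdisc, hcost⟩ := hcon 1 le_rfl (resp Q 1 ∅) hvalid1
    have h1 : (1:ℝ) ≤ bidCost (out (resp Q 1 ∅)) 1 := le_bidCost _ _ hdisc
    nlinarith [hcost]
  set f : ℝ := 1 / L * (1 + L) ^ ((1:ℝ) + 1 / L) with hfdef
  have hcf : c < f := hc
  have hc0 : (0:ℝ) < c := by linarith
  have hfc1 : 1 < f / c := (one_lt_div hc0).mpr hcf
  set ρ : ℝ := Real.sqrt (f / c) with hρdef
  have hρ1 : 1 < ρ := by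
    rw [hρdef, show (1:ℝ) = Real.sqrt 1 from (Real.sqrt_one).symm]
    exact Real.sqrt_lt_sqrt (by norm_num) hfc1
  have hρsq : c * ρ ^ 2 = f := by
    rw [hρdef, Real.sq_sqrt (by positivity)]
    field_simp
  have h1L : (0:ℝ) < 1 + L := by linarith
  have hkey : L * Real.log (c * ρ ^ 2) ≤ (L + 1) * Real.log (L + 1) - L * Real.log L := by
    rw [hρsq]
    have hlogf : Real.log f = -Real.log L + ((1:ℝ) + 1 / L) * Real.log (1 + L) := by
      rw [hfdef, Real.log_mul (by positivity) (by positivity),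
        Real.log_rpow h1L, Real.log_div one_ne_zero hL0.ne', Real.log_one]
      ring
    rw [hlogf]
    have e : L * ((1:ℝ) + 1 / L) = L + 1 := by field_simp
    have hcomm : Real.log (1 + L) = Real.log (L + 1) := by rw [add_comm]
    rw [hcomm]
    have e2 : L * (((1:ℝ) + 1 / L) * Real.log (L + 1)) = (L + 1) * Real.log (L + 1) := by
      rw [← e]; ring
    nlinarith [e2]
  obtain ⟨n, hn⟩ := exists_nat_gt
    (L * ((Real.log c / Real.log ρ + 1) * (Real.log c / Real.log ρ + 2))
      + (Real.log c / Real.log ρ + 1) * (Real.log c / Real.log ρ))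
  obtain ⟨r, hr⟩ := pigeon Q n (fun t => ρ ^ t)
  set T := (Finset.range n).filter (fun t => errCount Q (ρ ^ t) r ≤ H) with hTdef
  have hTcard : (n : ℝ) ≤ L * T.card := by
    have hrR : (n : ℝ) * (S k H : ℝ) ≤ (2:ℝ) ^ k * (T.card : ℝ) := by exact_mod_cast hr
    rw [hLdef, div_mul_eq_mul_div, le_div_iff₀ hSR]
    linarith
  set B := out r with hBdef
  have hDisc : ∀ t ∈ T, ∃ i, ρ ^ t ≤ B.X i := by
    intro t ht
    have hv : HValid H Q (ρ ^ t) r := (Finset.mem_filter.mp ht).2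
    exact (hcon (ρ ^ t) (one_le_pow₀ hρ1.le) r hv).1
  set j : ℕ → ℕ := fun t => if h : ∃ i, ρ ^ t ≤ B.X i then Nat.find h else 0 with hjdef
  have hj1 : ∀ t ∈ T, ρ ^ t ≤ B.X (j t) := by
    intro t ht
    have hex := hDisc t ht
    simp only [hjdef, dif_pos hex]
    exact Nat.find_spec hex
  have hj2 : ∀ t ∈ T, ∀ i < j t, B.X i < ρ ^ t := by
    intro t ht i hi
    have hex := hDisc t ht
    simp only [hjdef, dif_pos hex] at hi
    exact lt_of_not_ge (fun hge => Nat.find_min hex hi hge)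
  have hj3 : ∀ t ∈ T, ∑ i ∈ Finset.range (j t + 1), B.X i ≤ c * ρ ^ t := by
    intro t ht
    have hv : HValid H Q (ρ ^ t) r := (Finset.mem_filter.mp ht).2
    have hcost := (hcon (ρ ^ t) (one_le_pow₀ hρ1.le) r hv).2
    have hex := hDisc t ht
    rw [bidCost_eq B (ρ ^ t) hex] at hcost
    simp only [hjdef, dif_pos hex]
    exact hcost
  exact analytic L c ρ hL0 hc1 hρ1 hkey B.X B.pos n hn T
    (Finset.filter_subset _ _) hTcard j hj1 hj2 hj3
end

section
/- For all natural numbers k, H with k ≥ 1 and 2H ≤ k, one has (Σ_{j=0}^{H} C(k−H, j))² < 2^{k+2H}; equivalently, S(k−H,H)/2^{k−H} < 2^{2H − k/2}. -/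
lemma S_zero_right (N : ℕ) : S N 0 = 1 := by simp [S]

lemma S_zero_left (H : ℕ) : S 0 H = 1 := by
  unfold S
  rw [Finset.sum_eq_single 0]
  · simp
  · intro b _ hb; exact Nat.choose_eq_zero_of_lt (Nat.pos_of_ne_zero hb)
  · simp

lemma S_pascal (N H : ℕ) : S (N+1) (H+1) = S N (H+1) + S N H := by
  unfold S
  rw [Finset.sum_range_succ' (fun j => (N+1).choose j)]
  simp only [Nat.choose_succ_succ, Nat.choose_zero_right, Finset.sum_add_distrib]
  rw [Finset.sum_range_succ' (fun j => N.choose j)]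
  rw [Finset.sum_range_succ' (fun j => N.choose j) (H+1)]
  simp
  omega

lemma S_sq_le : ∀ N H, S N H ^ 2 ≤ 2 ^ (N + 3 * H) := by
  intro N
  induction N with
  | zero =>
    intro H
    rw [S_zero_left]
    exact Nat.one_le_two_pow
  | succ N ih =>
    intro H
    cases H with
    | zero => rw [S_zero_right]; exact Nat.one_le_two_pow
    | succ H =>
      have ha := ih (H+1)
      have hb := ih H
      rw [S_pascal]
      set a := S N (H+1)
      set b := S N H
      set Y := 2 ^ (N + 3 * H) with hY
      have hY1 : 1 ≤ Y := Nat.one_le_two_pow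
      have ha' : a ^ 2 ≤ 8 * Y := by
        have : 2 ^ (N + 3 * (H+1)) = 8 * Y := by rw [hY]; ring
        omega
      have hab : a * b < 3 * Y := by
        by_contra h
        push_neg at h
        have h2 : (3*Y)^2 ≤ (a*b)^2 := Nat.pow_le_pow_left h 2
        have h3 : (a*b)^2 = a^2 * b^2 := by ring
        nlinarith
      have hgoal : 2 ^ (N + 1 + 3 * (H+1)) = 16 * Y := by
        rw [hY]; ring
      rw [hgoal]
      nlinarith

lemma S_sq_lt (N H : ℕ) : S (N+1) (H+1) ^ 2 < 2 ^ (N + 1 + 3 * (H+1)) := by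
  have ha := S_sq_le N (H+1)
  have hb := S_sq_le N H
  rw [S_pascal]
  set a := S N (H+1)
  set b := S N H
  set Y := 2 ^ (N + 3 * H) with hY
  have hY1 : 1 ≤ Y := Nat.one_le_two_pow
  have ha' : a ^ 2 ≤ 8 * Y := by
    have : 2 ^ (N + 3 * (H+1)) = 8 * Y := by rw [hY]; ring
    omega
  have hab : a * b < 3 * Y := by
    by_contra h
    push_neg at h
    have h2 : (3*Y)^2 ≤ (a*b)^2 := Nat.pow_le_pow_left h 2
    have h3 : (a*b)^2 = a^2 * b^2 := by ring
    nlinarith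
  have hgoal : 2 ^ (N + 1 + 3 * (H+1)) = 16 * Y := by
    rw [hY]; ring
  rw [hgoal]
  nlinarith

theorem stmt16 (k H : ℕ) (hk : 1 ≤ k) (hH : 2 * H ≤ k) :
    (S (k - H) H) ^ 2 < 2 ^ (k + 2 * H) ∧
    (S (k - H) H : ℝ) / 2 ^ (k - H) < (2 : ℝ) ^ (2 * (H : ℝ) - (k : ℝ) / 2) := by
  have hpart1 : (S (k - H) H) ^ 2 < 2 ^ (k + 2 * H) := by
    cases H with
    | zero =>
      rw [S_zero_right]
      simpa using Nat.one_lt_two_pow_iff.mpr (by omega)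
    | succ H =>
      have hN : k - (H+1) = (k - (H+1) - 1) + 1 := by omega
      calc S (k - (H+1)) (H+1) ^ 2
          = S ((k - (H+1) - 1) + 1) (H+1) ^ 2 := by rw [← hN]
        _ < 2 ^ ((k - (H+1) - 1) + 1 + 3 * (H+1)) := S_sq_lt _ _
        _ = 2 ^ (k + 2 * (H+1)) := by congr 1; omega
  refine ⟨hpart1, ?_⟩
  have hHk : H ≤ k := by omega
  have hS2 : (S (k - H) H : ℝ) ^ 2 < (2:ℝ) ^ (k + 2 * H : ℕ) := by
    exact_mod_cast hpart1
  set y : ℝ := ((k : ℝ) + 2 * H) / 2 with hy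
  have hT2 : ((2:ℝ) ^ y) ^ 2 = (2:ℝ) ^ (k + 2 * H : ℕ) := by
    rw [sq, ← Real.rpow_add two_pos]
    have : y + y = ((k + 2 * H : ℕ) : ℝ) := by push_cast [hy]; ring
    rw [this, Real.rpow_natCast]
  have hSlt : (S (k - H) H : ℝ) < (2:ℝ) ^ y := by
    have := hS2
    rw [← hT2] at this
    exact lt_of_pow_lt_pow_left₀ 2 (Real.rpow_nonneg (by norm_num) y) this
  have hpow : (0:ℝ) < (2:ℝ) ^ (k - H) := by positivity
  rw [div_lt_iff₀ hpow]
  calc (S (k - H) H : ℝ) < (2:ℝ) ^ y := hSlt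
    _ = (2:ℝ) ^ (2 * (H:ℝ) - (k:ℝ)/2) * 2 ^ (k - H) := by
        rw [← Real.rpow_natCast 2 (k - H), ← Real.rpow_add two_pos]
        congr 1
        have : ((k - H : ℕ) : ℝ) = (k : ℝ) - H := by
          rw [Nat.cast_sub hHk]
        rw [this, hy]; ring
end
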